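/- arXiv:2202.06450 — 8 statements merged into one kernel-verified Lean document; each statement's English description precedes it below -/
import Mathlib

section
/- There exists an absolute constant c > 0 (independent of c_K, d, H and ε) with the following property. Let d, H, N, K be positive integers, let ε ∈ (0,1), and let c_K ≥ 2 be an integer such that K = c_K·d·H + 1 and N ≥ c·(c_K · H · d^{c_K} · ε^{-c_K} · (log(H·d/ε))^{c_K})^{1/(c_K−1)}. Let φ_1, …, φ_{K·N} ∈ ℝ^d satisfy ‖φ_t‖ ≤ 1 for all t; for k = 1,…,K set Φ_{k−1} = Σ_{t=(k−1)N+1}^{kN} φ_t φ_tᵀ, and define real d×d matrices by A_0 = I and A_{kN} = A_{(k−1)N} + Φ_{k−1}. Then each A_{(k−1)N} is positive definite, and the set K⁺ = {k ∈ {1,…,K} : Tr(A_{(k−1)N}^{-1} Φ_{k−1}) ≥ N·ε} satisfies |K⁺| ≤ c_K·d, and moreover c_K·d < K/H. -/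
open Matrix Finset

/-!
Along the recursion `A_{k+1} = A_k + Φ_k` the determinant grows by a factor of at least
`1 + Tr (A_k⁻¹ Φ_k)`: writing `A_k⁻¹ = Cᴴ C`, one has
`det (A_k + Φ_k) = det A_k · det (1 + C Φ_k Cᴴ)`, and `det (1 + M) ≥ 1 + Tr M` for `M ⪰ 0`.
So every batch in `K⁺` multiplies `det A` by at least `1 + Nε`, giving
`(1 + Nε)^|K⁺| ≤ det A_K`, while AM-GM on the eigenvalues gives
`det A_K ≤ (Tr A_K / d)^d ≤ ((d + KN) / d)^d`. With `c = 32`, the lower bound on `N`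
forces `((d + KN) / d)^d < (1 + Nε)^(c_K d + 1)`, hence `|K⁺| ≤ c_K d`.
-/

theorem Finset.one_add_sum_le_prod_one_add {ι R : Type*} [CommSemiring R] [PartialOrder R]
    [IsOrderedRing R] {s : Finset ι} {f : ι → R} (hf : ∀ i ∈ s, 0 ≤ f i) :
    1 + ∑ i ∈ s, f i ≤ ∏ i ∈ s, (1 + f i) := by
  classical
  induction s using Finset.cons_induction with
  | empty => simp
  | cons a s ha ih =>
    rw [prod_cons, sum_cons]
    have hfa : 0 ≤ f a := hf a (mem_cons_self a s)
    have hs := fun i hi => hf i (mem_cons_of_mem hi)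
    calc 1 + (f a + ∑ i ∈ s, f i) ≤ (1 + f a) * (1 + ∑ i ∈ s, f i) :=
          (le_add_of_nonneg_right (mul_nonneg hfa (sum_nonneg hs))).trans_eq (by ring)
      _ ≤ (1 + f a) * ∏ i ∈ s, (1 + f i) := by
          gcongr
          exacts [add_nonneg zero_le_one hfa, ih hs]

theorem Finset.pow_card_filter_le_prod_one_add {ι R : Type*} [CommSemiring R] [LinearOrder R]
    [IsOrderedRing R] {s : Finset ι} {f : ι → R} {a : R} (ha : 0 ≤ a)
    (hf : ∀ i ∈ s, 0 ≤ f i) : (1 + a) ^ #{i ∈ s | a ≤ f i} ≤ ∏ i ∈ s, (1 + f i) :=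
  calc (1 + a) ^ #{i ∈ s | a ≤ f i} = ∏ i ∈ s with a ≤ f i, (1 + a) := (prod_const _).symm
    _ ≤ ∏ i ∈ s with a ≤ f i, (1 + f i) :=
        prod_le_prod (fun _ _ => add_nonneg zero_le_one ha)
          fun _ hi => add_le_add_right (mem_filter.mp hi).2 1
    _ ≤ ∏ i ∈ s, (1 + f i) :=
        prod_le_prod_of_subset_of_one_le (filter_subset _ _)
          (fun i hi => add_nonneg zero_le_one (hf i (mem_of_mem_filter i hi)))
          fun i hi _ => le_add_of_nonneg_right (hf i hi)

theorem Real.prod_le_sum_div_card_pow {ι : Type*} (s : Finset ι) {z : ι → ℝ}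
    (hz : ∀ i ∈ s, 0 ≤ z i) : ∏ i ∈ s, z i ≤ ((∑ i ∈ s, z i) / #s) ^ #s := by
  rcases s.eq_empty_or_nonempty with rfl | hs
  · simp
  have hcard : (0 : ℝ) < #s := by exact_mod_cast hs.card_pos
  have amgm := Real.geom_mean_le_arith_mean_weighted s (fun _ => 1 / #s) z
    (fun _ _ => by positivity) (by simp [hcard.ne']) hz
  calc ∏ i ∈ s, z i = (∏ i ∈ s, z i ^ (1 / #s : ℝ)) ^ #s := by
        rw [← prod_pow]
        refine prod_congr rfl fun i hi => ?_
        rw [one_div, Real.rpow_inv_natCast_pow (hz i hi) hs.card_pos.ne']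
    _ ≤ _ := by
        gcongr
        · exact prod_nonneg fun i hi => Real.rpow_nonneg (hz i hi) _
        · simpa [← mul_sum, div_eq_inv_mul] using amgm

theorem mul_pow_le_pow_of_mul_rpow_one_div_le {c y x : ℝ} {m : ℕ} (hm : m ≠ 0) (hc : 0 ≤ c)
    (hy : 0 ≤ y) (h : c * y ^ ((1 : ℝ) / m) ≤ x) : c ^ m * y ≤ x ^ m :=
  calc c ^ m * y = (c * y ^ ((1 : ℝ) / m)) ^ m := by
        rw [mul_pow, one_div, Real.rpow_inv_natCast_pow hy hm]
    _ ≤ x ^ m := pow_le_pow_left₀ (by positivity) h m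

theorem one_add_mul_lt_one_add_mul_pow_succ {n : ℕ} {N ε : ℝ} (hn : 1 ≤ n) (hN : 1 ≤ N)
    (hε : 3 / 4 < ε) : 1 + (n + 1) * N < (1 + N * ε) ^ (n + 1) := by
  have bernoulli := one_add_mul_le_pow (by nlinarith : -2 ≤ N * ε) n
  have hquad : (1 + n * (N * ε)) * (1 + N * ε) ≤ (1 + N * ε) ^ (n + 1) := by
    rw [pow_succ]; gcongr
  have hn' : (1 : ℝ) ≤ n := by exact_mod_cast hn
  have hε2 : (9 / 16 : ℝ) * (n * N) ≤ n * N ^ 2 * ε ^ 2 := by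
    have : (9 / 16 : ℝ) ≤ N * ε ^ 2 := by nlinarith
    nlinarith [mul_le_mul_of_nonneg_left this (by positivity : (0 : ℝ) ≤ n * N)]
  have hlin : (n + 1) * N * (1 - ε) < (n + 1) * N / 4 := by
    nlinarith [mul_lt_mul_of_pos_left hε (by positivity : (0 : ℝ) < (n + 1) * N)]
  nlinarith

theorem batch_potential_lt_of_two_mul_le_pow {d H N cK : ℕ} {ε : ℝ} (hd : 0 < d) (hH : 0 < H)
    (hN : 0 < N) (hε : 0 < ε) (hcK : cK ≠ 0) (h : 2 * cK * H * N ≤ (N * ε) ^ cK) :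
    (((d : ℝ) + (cK * d * H + 1) * N) / d) ^ d < (1 + N * ε) ^ (cK * d + 1) := by
  have hd' : (1 : ℝ) ≤ d := by exact_mod_cast hd
  have hH' : (1 : ℝ) ≤ H := by exact_mod_cast hH
  have hcK' : (1 : ℝ) ≤ cK := by exact_mod_cast Nat.one_le_iff_ne_zero.mpr hcK
  have hNε : 0 < N * ε := by positivity
  have hbase : ((d : ℝ) + (cK * d * H + 1) * N) / d ≤ (1 + N * ε) ^ cK := by
    calc ((d : ℝ) + (cK * d * H + 1) * N) / d = 1 + cK * H * N + N / d := by field_simp; ring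
      _ ≤ 1 + 2 * cK * H * N := by
          have : (N : ℝ) / d ≤ cK * H * N := by
            rw [div_le_iff₀ (by positivity)]
            have := one_le_mul_of_one_le_of_one_le hcK' hH'
            nlinarith [mul_le_mul_of_nonneg_left this hNε.le]
          linarith
      _ ≤ 1 ^ cK + (N * ε) ^ cK := by rw [one_pow]; linarith
      _ ≤ (1 + N * ε) ^ cK := pow_add_pow_le zero_le_one hNε.le hcK
  calc (((d : ℝ) + (cK * d * H + 1) * N) / d) ^ d ≤ ((1 + N * ε) ^ cK) ^ d := by gcongr
    _ = (1 + N * ε) ^ (cK * d) := (pow_mul _ _ _).symm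
    _ < (1 + N * ε) ^ (cK * d + 1) := pow_lt_pow_right₀ (by linarith) (Nat.lt_succ_self _)

theorem eq_one_of_mul_log_lt_quarter {d H : ℕ} {ε : ℝ} (hd : 0 < d) (hH : 0 < H) (hε0 : 0 < ε)
    (hε1 : ε < 1) (h : d * Real.log (H * d / ε) < 1 / 4) : d = 1 ∧ H = 1 ∧ 3 / 4 < ε := by
  have hHd : H * d = 1 := by
    by_contra hne
    have two_le : 2 ≤ H * d := by have := Nat.mul_pos hH hd; omega
    have two_le' : (2 : ℝ) ≤ H * d := by exact_mod_cast two_le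
    have : Real.log 2 < Real.log (H * d / ε) :=
      Real.log_lt_log two_pos (by rw [lt_div_iff₀ hε0]; nlinarith)
    have hd' : (1 : ℝ) ≤ d := by exact_mod_cast hd
    nlinarith [Real.log_two_gt_d9]
  obtain ⟨rfl, rfl⟩ : H = 1 ∧ d = 1 := mul_eq_one.mp hHd
  refine ⟨rfl, rfl, ?_⟩
  have : 1 - ε ≤ Real.log (1 / ε) := by
    rw [one_div, Real.log_inv]; linarith [Real.log_le_sub_one_of_pos hε0]
  norm_num at h this ⊢
  linarith

theorem batch_potential_lt {d H N cK : ℕ} {ε : ℝ} (hd : 0 < d) (hH : 0 < H) (hN : 0 < N)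
    (hcK : 2 ≤ cK) (hε0 : 0 < ε) (hε1 : ε < 1)
    (hNge : (N : ℝ) ≥ 32 * (((cK : ℝ) * H * (d : ℝ) ^ cK * ε ^ (-(cK : ℤ)) *
      Real.log ((H : ℝ) * d / ε) ^ cK) ^ ((1 : ℝ) / ((cK : ℝ) - 1)))) :
    (((d : ℝ) + (cK * d * H + 1) * N) / d) ^ d < (1 + N * ε) ^ (cK * d + 1) := by
  obtain ⟨m, rfl⟩ : ∃ m, cK = m + 2 := ⟨cK - 2, by omega⟩
  set L := Real.log ((H : ℝ) * d / ε)
  have hd' : (1 : ℝ) ≤ d := by exact_mod_cast hd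
  have hH' : (1 : ℝ) ≤ H := by exact_mod_cast hH
  have hL : 0 < L := Real.log_pos (by rw [lt_div_iff₀ hε0]; nlinarith)
  have hpow : 32 ^ (m + 1) *
      (((m + 2 : ℕ) : ℝ) * H * d ^ (m + 2) * ε ^ (-((m + 2 : ℕ) : ℤ)) * L ^ (m + 2)) ≤
      (N : ℝ) ^ (m + 1) :=
    mul_pow_le_pow_of_mul_rpow_one_div_le (by omega) (by norm_num) (by positivity)
      (by convert hNge using 4; push_cast; ring)
  -- Either `d L ≥ 1/4`, and then `32^(c_K-1) (d L)^c_K ≥ 2` (this fixes `c = 32`) makes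
  -- `(Nε)^c_K ≥ 2 c_K H N`; or `d = H = 1` and `ε > 3/4`, where a quadratic bound suffices.
  rcases le_or_gt (1 / 4) (d * L) with hdL | hdL
  · refine batch_potential_lt_of_two_mul_le_pow hd hH hN hε0 (by omega) ?_
    have h2 : 2 ≤ 32 ^ (m + 1) * (d * L) ^ (m + 2) := by
      have : 8 ≤ (32 * (d * L)) ^ (m + 1) :=
        (by linarith : (8 : ℝ) ≤ 32 * (d * L)).trans (le_self_pow₀ (by linarith) (by omega))
      calc (2 : ℝ) ≤ 8 * (d * L) := by linarith
        _ ≤ (32 * (d * L)) ^ (m + 1) * (d * L) := by gcongr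
        _ = 32 ^ (m + 1) * (d * L) ^ (m + 2) := by ring
    calc 2 * ((m + 2 : ℕ) : ℝ) * H * N
        ≤ N * ((m + 2 : ℕ) * H * (32 ^ (m + 1) * (d * L) ^ (m + 2))) := by
          have := mul_le_mul_of_nonneg_left h2 (by positivity : (0 : ℝ) ≤ N * ((m + 2 : ℕ) * H))
          nlinarith
      _ = N * (32 ^ (m + 1) *
          (((m + 2 : ℕ) : ℝ) * H * d ^ (m + 2) * ε ^ (-((m + 2 : ℕ) : ℤ)) * L ^ (m + 2))) *
          ε ^ (m + 2) := by
          rw [_root_.zpow_neg, zpow_natCast]; field_simp; ring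
      _ ≤ N * N ^ (m + 1) * ε ^ (m + 2) := by gcongr
      _ = (N * ε) ^ (m + 2) := by ring
  · obtain ⟨rfl, rfl, hε⟩ := eq_one_of_mul_log_lt_quarter hd hH hε0 hε1 hdL
    have := one_add_mul_lt_one_add_mul_pow_succ (n := m + 2) (by omega)
      (by exact_mod_cast hN : (1 : ℝ) ≤ N) hε
    norm_num
    convert this using 2
    push_cast
    ring

namespace Matrix

variable {n : Type*}

theorem posDef_of_succ_eq_add {A Φ : ℕ → Matrix n n ℝ} (h0 : (A 0).PosDef)
    (hΦ : ∀ k, (Φ k).PosSemidef) (hA : ∀ k, A (k + 1) = A k + Φ k) (k : ℕ) : (A k).PosDef := by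
  induction k with
  | zero => exact h0
  | succ k ih => rw [hA k]; exact ih.add_posSemidef (hΦ k)

variable [Fintype n]

theorem trace_eq_trace_zero_add_sum {A Φ : ℕ → Matrix n n ℝ}
    (hA : ∀ k, A (k + 1) = A k + Φ k) (j : ℕ) :
    (A j).trace = (A 0).trace + ∑ k ∈ range j, (Φ k).trace := by
  simp [eq_sum_range_sub (fun k => (A k).trace) j, hA, trace_add]

theorem _root_.EuclideanSpace.trace_vecMulVec_self (v : EuclideanSpace ℝ n) :
    (vecMulVec v v).trace = ‖v‖ ^ 2 := by
  rw [trace_vecMulVec, ← real_inner_self_eq_norm_sq, EuclideanSpace.inner_eq_star_dotProduct,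
    star_trivial]

theorem trace_sum_vecMulVec_self_le_card {ι : Type*} {s : Finset ι}
    {v : ι → EuclideanSpace ℝ n} (hv : ∀ t ∈ s, ‖v t‖ ≤ 1) :
    (∑ t ∈ s, vecMulVec (v t) (v t)).trace ≤ #s := by
  rw [trace_sum, card_eq_sum_ones, Nat.cast_sum, Nat.cast_one]
  refine sum_le_sum fun t ht => ?_
  rw [EuclideanSpace.trace_vecMulVec_self]
  exact pow_le_one₀ (norm_nonneg _) (hv t ht)

variable [DecidableEq n]

theorem IsHermitian.det_one_add {A : Matrix n n ℝ} (hA : A.IsHermitian) :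
    (1 + A).det = ∏ i, (1 + hA.eigenvalues i) := by
  have : 1 + A = cfc (fun x : ℝ => 1 + x) A := by
    rw [cfc_add .., cfc_const_one .., cfc_id' ..]
  rw [this, hA.cfc_eq]
  simp [IsHermitian.cfc, -Unitary.conjStarAlgAut_apply]

theorem PosSemidef.one_add_trace_le_det_one_add {M : Matrix n n ℝ} (hM : M.PosSemidef) :
    1 + M.trace ≤ (1 + M).det := by
  rw [hM.isHermitian.det_one_add, hM.isHermitian.trace_eq_sum_eigenvalues]
  exact one_add_sum_le_prod_one_add fun i _ => hM.eigenvalues_nonneg i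

theorem PosSemidef.det_le_trace_div_card_pow {A : Matrix n n ℝ} (hA : A.PosSemidef) :
    A.det ≤ (A.trace / Fintype.card n) ^ Fintype.card n := by
  rw [hA.isHermitian.det_eq_prod_eigenvalues, hA.isHermitian.trace_eq_sum_eigenvalues]
  simpa using Real.prod_le_sum_div_card_pow univ fun i _ => hA.eigenvalues_nonneg i

open scoped MatrixOrder in
theorem PosSemidef.trace_mul_nonneg {S Q : Matrix n n ℝ} (hS : S.PosSemidef)
    (hQ : Q.PosSemidef) : 0 ≤ (S * Q).trace := by
  obtain ⟨C, rfl⟩ := CStarAlgebra.nonneg_iff_eq_star_mul_self.mp hS.nonneg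
  rw [star_eq_conjTranspose, Matrix.mul_assoc, trace_mul_comm]
  exact (hQ.mul_mul_conjTranspose_same C).trace_nonneg

open scoped MatrixOrder in
theorem PosSemidef.one_add_trace_mul_le_det_one_add_mul {S Q : Matrix n n ℝ}
    (hS : S.PosSemidef) (hQ : Q.PosSemidef) : 1 + (S * Q).trace ≤ (1 + S * Q).det := by
  obtain ⟨C, rfl⟩ := CStarAlgebra.nonneg_iff_eq_star_mul_self.mp hS.nonneg
  rw [star_eq_conjTranspose, Matrix.mul_assoc, trace_mul_comm, det_one_add_mul_comm]
  exact (hQ.mul_mul_conjTranspose_same C).one_add_trace_le_det_one_add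

theorem PosDef.det_mul_one_add_trace_inv_mul_le_det_add {P Q : Matrix n n ℝ} (hP : P.PosDef)
    (hQ : Q.PosSemidef) : P.det * (1 + (P⁻¹ * Q).trace) ≤ (P + Q).det := by
  have hPQ : P + Q = P * (1 + P⁻¹ * Q) := by
    rw [Matrix.mul_add, Matrix.mul_one,
      mul_nonsing_inv_cancel_left _ _ ((isUnit_iff_isUnit_det P).mp hP.isUnit)]
  rw [hPQ, det_mul]
  exact mul_le_mul_of_nonneg_left
    (hP.inv.posSemidef.one_add_trace_mul_le_det_one_add_mul hQ) hP.det_pos.le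

theorem det_mul_prod_one_add_trace_inv_mul_le_det {A Φ : ℕ → Matrix n n ℝ} (h0 : (A 0).PosDef)
    (hΦ : ∀ k, (Φ k).PosSemidef) (hA : ∀ k, A (k + 1) = A k + Φ k) (j : ℕ) :
    (A 0).det * ∏ k ∈ range j, (1 + ((A k)⁻¹ * Φ k).trace) ≤ (A j).det := by
  induction j with
  | zero => simp
  | succ j ih =>
    have hAj := posDef_of_succ_eq_add h0 hΦ hA j
    rw [prod_range_succ, ← mul_assoc, hA j]
    calc _ ≤ (A j).det * (1 + ((A j)⁻¹ * Φ j).trace) :=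
          mul_le_mul_of_nonneg_right ih
            (add_nonneg zero_le_one (hAj.inv.posSemidef.trace_mul_nonneg (hΦ j)))
      _ ≤ _ := hAj.det_mul_one_add_trace_inv_mul_le_det_add (hΦ j)

theorem one_add_pow_card_filter_le_trace_div_card_pow {A Φ : ℕ → Matrix n n ℝ} (h0 : A 0 = 1)
    (hΦ : ∀ k, (Φ k).PosSemidef) (hA : ∀ k, A (k + 1) = A k + Φ k) {x T : ℝ} (hx : 0 ≤ x)
    {K : ℕ} (hT : ∑ k ∈ range K, (Φ k).trace ≤ T) :
    (1 + x) ^ #{k ∈ range K | x ≤ ((A k)⁻¹ * Φ k).trace} ≤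
      ((Fintype.card n + T) / Fintype.card n) ^ Fintype.card n := by
  have hA0 : (A 0).PosDef := h0 ▸ PosDef.one
  have hPD := posDef_of_succ_eq_add hA0 hΦ hA
  calc _ ≤ ∏ k ∈ range K, (1 + ((A k)⁻¹ * Φ k).trace) :=
        pow_card_filter_le_prod_one_add hx
          fun k _ => (hPD k).inv.posSemidef.trace_mul_nonneg (hΦ k)
    _ ≤ (A K).det := by simpa [h0] using det_mul_prod_one_add_trace_inv_mul_le_det hA0 hΦ hA K
    _ ≤ ((A K).trace / Fintype.card n) ^ Fintype.card n :=
        (hPD K).posSemidef.det_le_trace_div_card_pow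
    _ ≤ _ := by
        gcongr
        · exact div_nonneg (hPD K).posSemidef.trace_nonneg (Nat.cast_nonneg _)
        · rwa [trace_eq_trace_zero_add_sum hA, h0, trace_one, add_le_add_iff_left]

end Matrix

/-- Batched finite-sample elliptical potential lemma: there is an absolute constant
`c > 0` such that whenever `K = c_K d H + 1` with `c_K ≥ 2` and
`N ≥ c (c_K H d^{c_K} ε^{-c_K} log^{c_K}(Hd/ε))^{1/(c_K-1)}`, for any batch of
feature vectors of norm at most `1` with `A_0 = I`, `A_{k+1} = A_k + Φ_k`, each `A_k`
is positive definite, and the number of batches `k < K` with `Tr(A_k⁻¹ Φ_k) ≥ N ε`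
is at most `c_K d`, which is moreover less than `K / H`. -/
theorem batched_finite_sample_elliptical_potential :
    ∃ c : ℝ, 0 < c ∧
      ∀ (d H N K cK : ℕ), 0 < d → 0 < H → 0 < N → 0 < K →
        2 ≤ cK →
        K = cK * d * H + 1 →
        ∀ ε : ℝ, 0 < ε → ε < 1 →
        (N : ℝ) ≥ c * (((cK : ℝ) * H * (d : ℝ) ^ cK * ε ^ (-(cK : ℤ)) *
            Real.log ((H : ℝ) * d / ε) ^ cK) ^ ((1 : ℝ) / ((cK : ℝ) - 1))) →
        ∀ φ : ℕ → EuclideanSpace ℝ (Fin d),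
          (∀ t < K * N, ‖φ t‖ ≤ 1) →
        ∀ A : ℕ → Matrix (Fin d) (Fin d) ℝ,
          A 0 = 1 →
          (∀ k, A (k + 1) = A k + ∑ t ∈ Finset.Ico (k * N) ((k + 1) * N),
              vecMulVec (φ t) (φ t)) →
          (∀ k < K, (A k).PosDef) ∧
          ({k : ℕ | k < K ∧ (N : ℝ) * ε ≤
              Matrix.trace ((A k)⁻¹ * ∑ t ∈ Finset.Ico (k * N) ((k + 1) * N),
                vecMulVec (φ t) (φ t))}.ncard ≤ cK * d) ∧
          ((cK * d : ℕ) : ℝ) < (K : ℝ) / (H : ℝ) := by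
  refine ⟨32, by norm_num, ?_⟩
  intro d H N K cK hd hH hN _ hcK hK ε hε0 hε1 hNge φ hφ A hA0 hA
  set Φ : ℕ → Matrix (Fin d) (Fin d) ℝ :=
    fun k => ∑ t ∈ Ico (k * N) ((k + 1) * N), vecMulVec (φ t) (φ t)
  have hΦ : ∀ k, (Φ k).PosSemidef := fun k =>
    posSemidef_sum _ fun t _ => posSemidef_vecMulVec_self_star (φ t)
  have hPD := posDef_of_succ_eq_add (hA0 ▸ PosDef.one) hΦ hA
  have hΦ_trace : ∀ k < K, (Φ k).trace ≤ N := fun k hk =>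
    calc (Φ k).trace ≤ #(Ico (k * N) ((k + 1) * N)) := trace_sum_vecMulVec_self_le_card
          fun t ht => hφ t ((mem_Ico.mp ht).2.trans_le (Nat.mul_le_mul_right N hk))
      _ = N := by simp [Nat.succ_mul]
  set F := {k ∈ range K | N * ε ≤ ((A k)⁻¹ * Φ k).trace}
  have hF : ((1 : ℝ) + N * ε) ^ #F ≤ ((d + K * N) / d) ^ d := by
    simpa using one_add_pow_card_filter_le_trace_div_card_pow hA0 hΦ hA
      (by positivity : (0 : ℝ) ≤ N * ε) (T := K * N)
      (by simpa using sum_le_sum fun k hk => hΦ_trace k (mem_range.mp hk))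
  have hF_card : #F ≤ cK * d := by
    have hlt := hF.trans_lt <| by
      subst hK; push_cast; exact batch_potential_lt hd hH hN hcK hε0 hε1 hNge
    exact Nat.lt_succ_iff.mp
      ((pow_lt_pow_iff_right₀ (lt_add_of_pos_right 1 (by positivity))).mp hlt)
  refine ⟨fun k _ => hPD k, ?_, ?_⟩
  · calc _ = #F := by rw [← Set.ncard_coe_finset]; congr 1; ext k; simp [F, Φ]
      _ ≤ cK * d := hF_card
  · rw [hK, lt_div_iff₀ (by positivity)]
    push_cast
    linarith
end

section
/- Let A be a real symmetric d×d matrix such that A − I is positive semidefinite, and let Φ = Σ_{t=1}^n φ_t φ_tᵀ for vectors φ_1, …, φ_n ∈ ℝ^d. Then Tr(A^{-1} Φ) ≤ (det(A+Φ)/det(A)) · log( det(A+Φ)/det(A) ). -/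
/-!
Write `Φ = Cᵀ C`. By the matrix determinant lemma `det (A + Φ) / det A = det (1 + M)` with
`M = C A⁻¹ Cᵀ` positive semidefinite, and `Tr (A⁻¹ Φ) = Tr M`. If `μᵢ ≥ 0` are the eigenvalues
of `M` and `P = ∏ (1 + μᵢ)`, then `μᵢ ≤ (1 + μᵢ) log (1 + μᵢ) ≤ P log (1 + μᵢ)`, and summing
gives `Tr M ≤ P log P`.
-/

open Matrix

theorem Real.sub_one_le_mul_log {x : ℝ} (hx : 0 < x) : x - 1 ≤ x * Real.log x := by
  have := mul_le_mul_of_nonneg_left (Real.one_sub_inv_le_log_of_pos hx) hx.le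
  rwa [mul_sub, mul_one, mul_inv_cancel₀ hx.ne'] at this

theorem Finset.sum_le_prod_one_add_mul_log_prod {ι : Type*} (s : Finset ι) {μ : ι → ℝ}
    (hμ : ∀ i ∈ s, 0 ≤ μ i) :
    ∑ i ∈ s, μ i ≤ (∏ i ∈ s, (1 + μ i)) * Real.log (∏ i ∈ s, (1 + μ i)) := by
  set P := ∏ i ∈ s, (1 + μ i)
  have hpos : ∀ i ∈ s, 0 < 1 + μ i := fun i hi => by linarith [hμ i hi]
  have hle : ∀ i ∈ s, 1 + μ i ≤ P := fun i hi => by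
    simpa using Finset.prod_le_prod_of_subset_of_one_le (f := fun j => 1 + μ j)
      (Finset.singleton_subset_iff.2 hi) (by simpa using (hpos i hi).le)
      (fun j hj _ => by linarith [hμ j hj])
  rw [Real.log_prod fun i hi => (hpos i hi).ne', Finset.mul_sum]
  refine Finset.sum_le_sum fun i hi => ?_
  calc μ i = (1 + μ i) - 1 := by ring
    _ ≤ (1 + μ i) * Real.log (1 + μ i) := Real.sub_one_le_mul_log (hpos i hi)
    _ ≤ P * Real.log (1 + μ i) :=
      mul_le_mul_of_nonneg_right (hle i hi) (Real.log_nonneg (by linarith [hμ i hi]))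

namespace Matrix

variable {m n : Type*} [Fintype m]

theorem sum_vecMulVec_self_eq_transpose_mul {R : Type*} [CommSemiring R] (v : m → n → R) :
    ∑ t, vecMulVec (v t) (v t) = (of v)ᵀ * of v := by
  ext i j
  simp [Matrix.sum_apply, mul_apply, vecMulVec_apply]

variable [Fintype n] [DecidableEq n]

theorem IsHermitian.det_one_add_s2 {𝕜 : Type*} [RCLike 𝕜] {M : Matrix n n 𝕜} (hM : M.IsHermitian) :
    (1 + M).det = ∏ i, (1 + (hM.eigenvalues i : 𝕜)) := by
  conv_lhs =>
    rw [hM.spectral_theorem, ← map_one (Unitary.conjStarAlgAut 𝕜 _ hM.eigenvectorUnitary),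
      ← map_add]
  rw [Unitary.conjStarAlgAut_apply, det_mul_right_comm,
    Unitary.mul_star_self_of_mem hM.eigenvectorUnitary.2, one_mul, ← diagonal_one, diagonal_add,
    det_diagonal]
  simp

theorem PosSemidef.trace_le_det_one_add_mul_log {M : Matrix n n ℝ} (hM : M.PosSemidef) :
    M.trace ≤ (1 + M).det * Real.log (1 + M).det := by
  rw [hM.isHermitian.trace_eq_sum_eigenvalues, hM.isHermitian.det_one_add_s2]
  exact Finset.univ.sum_le_prod_one_add_mul_log_prod fun i _ => hM.eigenvalues_nonneg i

theorem PosDef.trace_inv_mul_transpose_mul_le [DecidableEq m] {A : Matrix n n ℝ} (hA : A.PosDef)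
    (C : Matrix m n ℝ) :
    trace (A⁻¹ * (Cᵀ * C)) ≤
      ((A + Cᵀ * C).det / A.det) * Real.log ((A + Cᵀ * C).det / A.det) := by
  have hM : (C * A⁻¹ * Cᵀ).PosSemidef := by
    simpa using hA.inv.posSemidef.mul_mul_conjTranspose_same C
  have hratio : (A + Cᵀ * C).det / A.det = (1 + C * A⁻¹ * Cᵀ).det := by
    rw [det_add_mul _ _ hA.det_pos.ne'.isUnit, mul_div_cancel_left₀ _ hA.det_pos.ne']
  rw [hratio, ← Matrix.mul_assoc, trace_mul_comm, ← Matrix.mul_assoc]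
  exact hM.trace_le_det_one_add_mul_log

end Matrix

theorem trace_inv_mul_le_det_ratio_mul_log_det_ratio_general
    (d n : ℕ) (A : Matrix (Fin d) (Fin d) ℝ)
    (hA : (A - 1).PosSemidef)
    (φ : Fin n → EuclideanSpace ℝ (Fin d)) :
    Matrix.trace (A⁻¹ * ∑ t, vecMulVec (φ t) (φ t)) ≤
      ((A + ∑ t, vecMulVec (φ t) (φ t)).det / A.det) *
        Real.log ((A + ∑ t, vecMulVec (φ t) (φ t)).det / A.det) := by
  have hApd : A.PosDef := by simpa using PosDef.posSemidef_add hA PosDef.one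
  rw [sum_vecMulVec_self_eq_transpose_mul fun t => (φ t).ofLp]
  exact hApd.trace_inv_mul_transpose_mul_le _

/-- Bridge between trace and determinant: if `A` is real symmetric with `A - I`
positive semidefinite and `Φ = Σ_t φ_t φ_tᵀ`, then
`Tr(A⁻¹ Φ) ≤ (det(A+Φ)/det A) · log(det(A+Φ)/det A)`. -/
theorem trace_inv_mul_le_det_ratio_mul_log_det_ratio
    (d n : ℕ) (A : Matrix (Fin d) (Fin d) ℝ)
    (hAsymm : A.IsSymm) (hA : (A - 1).PosSemidef)
    (φ : Fin n → EuclideanSpace ℝ (Fin d)) :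
    Matrix.trace (A⁻¹ * ∑ t, vecMulVec (φ t) (φ t)) ≤
      ((A + ∑ t, vecMulVec (φ t) (φ t)).det / A.det) *
        Real.log ((A + ∑ t, vecMulVec (φ t) (φ t)).det / A.det) :=
  trace_inv_mul_le_det_ratio_mul_log_det_ratio_general d n A hA φ
end

section
/- Let A be a real symmetric positive definite d×d matrix and X a real symmetric positive semidefinite d×d matrix. Then Tr((A + X)^{-1} X) ≤ log det(A + X) − log det(A). -/
/-!
With `M = A + X` we have `Tr(M⁻¹ X) = d - Tr(M⁻¹ A)`. The matrix `A^{1/2} M⁻¹ A^{1/2}` is positive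
definite with trace `Tr(M⁻¹ A)` and determinant `det A / det M`, so `log x ≤ x - 1` applied to its
eigenvalues gives `log det A - log det M ≤ Tr(M⁻¹ A) - d`.
-/

open Matrix
open scoped MatrixOrder

namespace Matrix

variable {n : Type*} [Fintype n] [DecidableEq n]

theorem PosDef.log_det_le_trace_sub_card {B : Matrix n n ℝ} (hB : B.PosDef) :
    Real.log B.det ≤ B.trace - Fintype.card n := by
  have hpos := hB.eigenvalues_pos
  rw [hB.isHermitian.det_eq_prod_eigenvalues, hB.isHermitian.trace_eq_sum_eigenvalues]
  simp only [RCLike.ofReal_real_eq_id, id_eq]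
  rw [Real.log_prod fun i _ ↦ (hpos i).ne']
  calc ∑ i, Real.log (hB.isHermitian.eigenvalues i)
      ≤ ∑ i, (hB.isHermitian.eigenvalues i - 1) :=
        Finset.sum_le_sum fun i _ ↦ Real.log_le_sub_one_of_pos (hpos i)
    _ = _ := by simp [Finset.sum_sub_distrib]

theorem PosDef.log_det_sub_log_det_le_trace_inv_mul_sub_card {A M : Matrix n n ℝ}
    (hA : A.PosDef) (hM : M.PosDef) :
    Real.log A.det - Real.log M.det ≤ (M⁻¹ * A).trace - Fintype.card n := by
  set S := CFC.sqrt A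
  have hSS : S * S = A := CFC.sqrt_mul_sqrt_self A hA.posSemidef.nonneg
  have hSstar : star S = S := (CFC.sqrt_nonneg A).isSelfAdjoint
  have hS : IsUnit S := hA.isStrictlyPositive.isUnit_cfcSqrt
  have hC : (star S * M⁻¹ * S).PosDef := (IsUnit.posDef_star_left_conjugate_iff hS).mpr hM.inv
  rw [hSstar] at hC
  have hdet : (S * M⁻¹ * S).det = A.det * M.det⁻¹ := by
    rw [det_mul, det_mul, det_nonsing_inv, Ring.inverse_eq_inv, ← hSS, det_mul]; ring
  have htrace : (S * M⁻¹ * S).trace = (M⁻¹ * A).trace := by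
    rw [trace_mul_comm, ← Matrix.mul_assoc, hSS, trace_mul_comm]
  have hlog := hC.log_det_le_trace_sub_card
  rwa [hdet, htrace, Real.log_mul hA.det_pos.ne' (inv_ne_zero hM.det_pos.ne'), Real.log_inv,
    ← sub_eq_add_neg] at hlog

end Matrix

theorem trace_inv_add_mul_le_log_det_sub_general
    (d : ℕ) (A X : Matrix (Fin d) (Fin d) ℝ)
    (hA : A.PosDef) (hX : X.PosSemidef) :
    Matrix.trace ((A + X)⁻¹ * X) ≤ Real.log (A + X).det - Real.log A.det := by
  have hM : (A + X).PosDef := hA.add_posSemidef hX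
  have hsum : (A + X)⁻¹ * A + (A + X)⁻¹ * X = 1 := by
    rw [← Matrix.mul_add, nonsing_inv_mul _ hM.det_pos.ne'.isUnit]
  have htrace : ((A + X)⁻¹ * A).trace + ((A + X)⁻¹ * X).trace = d := by
    rw [← trace_add, hsum, trace_one, Fintype.card_fin]
  have hlog := hA.log_det_sub_log_det_le_trace_inv_mul_sub_card hM
  rw [Fintype.card_fin] at hlog
  linarith

/-- If `A` is real symmetric positive definite and `X` is real symmetric positive
semidefinite, then `Tr((A + X)⁻¹ X) ≤ log det (A + X) - log det A`. -/
theorem trace_inv_add_mul_le_log_det_sub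
    (d : ℕ) (A X : Matrix (Fin d) (Fin d) ℝ)
    (hAsymm : A.IsSymm) (hA : A.PosDef)
    (hXsymm : X.IsSymm) (hX : X.PosSemidef) :
    Matrix.trace ((A + X)⁻¹ * X) ≤ Real.log (A + X).det - Real.log A.det :=
  trace_inv_add_mul_le_log_det_sub_general d A X hA hX
end

section
/- Let A and B be real symmetric positive definite d×d matrices such that A − B is positive semidefinite. Then for every x ∈ ℝ^d, xᵀ A x ≤ (det(A)/det(B)) · xᵀ B x. -/
/-!
Let `S = √B` and `M = S⁻¹ A S⁻¹`. From `B ≤ A` we get `1 ≤ M`, so every eigenvalue of `M` is at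
least `1` and hence at most their product `det M = det A / det B`. Thus `M ≤ det M • 1`, and
conjugating back by `S` gives `A ≤ (det A / det B) • B` in the Loewner order.
-/

open Matrix
open scoped MatrixOrder

lemma Finset.single_le_prod_of_one_le {ι R : Type*} [CommSemiring R] [PartialOrder R]
    [IsOrderedRing R] {s : Finset ι} {f : ι → R} (hf : ∀ i ∈ s, 1 ≤ f i) {a : ι}
    (ha : a ∈ s) :
    f a ≤ ∏ i ∈ s, f i := by
  classical
  rw [← Finset.mul_prod_erase s f ha]
  exact le_mul_of_one_le_right (zero_le_one.trans (hf a ha))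
    (Finset.one_le_prod fun i hi ↦ hf i (Finset.mem_of_mem_erase hi))

namespace Matrix

open scoped ComplexOrder

variable {n 𝕜 : Type*} [Fintype n] [RCLike 𝕜]

theorem dotProduct_mulVec_le_of_le {A B : Matrix n n 𝕜} (h : A ≤ B) (x : n → 𝕜) :
    star x ⬝ᵥ A *ᵥ x ≤ star x ⬝ᵥ B *ᵥ x := by
  simpa [sub_mulVec, dotProduct_sub] using (le_iff.mp h).dotProduct_mulVec_nonneg x

variable [DecidableEq n]

theorem le_det_smul_one_of_one_le {M : Matrix n n 𝕜} (hM : 1 ≤ M) : M ≤ M.det • 1 := by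
  have hMh : M.IsHermitian := by
    simpa using (le_iff.mp hM).isHermitian.add (isHermitian_one (α := 𝕜))
  have hspec : ∀ x ∈ spectrum ℝ M, 1 ≤ x := by
    rw [← algebraMap_le_iff_le_spectrum hMh.isSelfAdjoint, map_one]
    exact hM
  rw [hMh.spectrum_real_eq_range_eigenvalues] at hspec
  have hdet : M.det • (1 : Matrix n n 𝕜) = algebraMap ℝ _ (∏ i, hMh.eigenvalues i) := by
    rw [hMh.det_eq_prod_eigenvalues, Algebra.algebraMap_eq_smul_one, ← RCLike.ofReal_prod,
      RCLike.real_smul_eq_coe_smul (K := 𝕜)]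
  rw [hdet, le_algebraMap_iff_spectrum_le hMh.isSelfAdjoint, hMh.spectrum_real_eq_range_eigenvalues]
  rintro _ ⟨i, rfl⟩
  exact Finset.single_le_prod_of_one_le (fun j _ ↦ hspec _ ⟨j, rfl⟩) (Finset.mem_univ i)

theorem PosDef.le_det_div_det_smul_of_le {A B : Matrix n n 𝕜} (hB : B.PosDef) (hBA : B ≤ A) :
    A ≤ (A.det / B.det) • B := by
  set S := CFC.sqrt B
  have hS : IsSelfAdjoint S := (CFC.sqrt_nonneg B).isSelfAdjoint
  have hSS : S * S = B := CFC.sqrt_mul_sqrt_self B hB.posSemidef.nonneg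
  have hdetS : S.det * S.det = B.det := by rw [← det_mul, hSS]
  have hS0 : S.det ≠ 0 := left_ne_zero_of_mul (hdetS ▸ hB.det_pos.ne')
  set T := S⁻¹
  have hT : IsSelfAdjoint T := hS.isHermitian.inv.isSelfAdjoint
  have hST : S * T = 1 := mul_nonsing_inv S (isUnit_iff_ne_zero.mpr hS0)
  have hTS : T * S = 1 := nonsing_inv_mul S (isUnit_iff_ne_zero.mpr hS0)
  have hTBT : T * B * T = 1 := by
    rw [← hSS, ← mul_assoc, hTS, one_mul, hST]
  have hdet : (T * A * T).det = A.det / B.det := by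
    rw [det_mul, det_mul, det_nonsing_inv, Ring.inverse_eq_inv', ← hdetS]
    field_simp
  have hconj : S * (T * A * T) * S = A := by
    rw [← mul_assoc, ← mul_assoc, hST, one_mul, mul_assoc, hTS, mul_one]
  have hM : 1 ≤ T * A * T := hTBT ▸ hT.conjugate_le_conjugate hBA
  have h := hS.conjugate_le_conjugate (le_det_smul_one_of_one_le hM)
  rwa [hconj, hdet, mul_smul_comm, mul_one, smul_mul_assoc, hSS] at h

end Matrix

theorem quadForm_le_det_ratio_mul_quadForm_general
    (d : ℕ) (A B : Matrix (Fin d) (Fin d) ℝ)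
    (hB : B.PosDef)
    (hAB : (A - B).PosSemidef) :
    ∀ x : Fin d → ℝ, x ⬝ᵥ A.mulVec x ≤ (A.det / B.det) * (x ⬝ᵥ B.mulVec x) := by
  intro x
  simpa [smul_mulVec, dotProduct_smul] using
    dotProduct_mulVec_le_of_le (hB.le_det_div_det_smul_of_le hAB) x

/-- If `A ⪰ B ≻ 0` are real symmetric positive definite matrices, then for every
vector `x`, `xᵀ A x ≤ (det A / det B) · xᵀ B x`. -/
theorem quadForm_le_det_ratio_mul_quadForm
    (d : ℕ) (A B : Matrix (Fin d) (Fin d) ℝ)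
    (hAsymm : A.IsSymm) (hA : A.PosDef)
    (hBsymm : B.IsSymm) (hB : B.PosDef)
    (hAB : (A - B).PosSemidef) :
    ∀ x : Fin d → ℝ, x ⬝ᵥ A.mulVec x ≤ (A.det / B.det) * (x ⬝ᵥ B.mulVec x) :=
  quadForm_le_det_ratio_mul_quadForm_general d A B hB hAB
end

section
/- Let A be a real symmetric d×d matrix such that A − I is positive semidefinite, and let Δ be a real symmetric d×d matrix with |Δ_{ij}| ≤ ε for all entries, where ε > 0 and d·ε < 1. Then A + Δ is positive definite, and for every φ ∈ ℝ^d with ‖φ‖ ≤ 1 one has |φᵀ Δ φ| ≤ d·ε and |φᵀ( (A+Δ)^{-1} − A^{-1} )φ| ≤ d·ε/(1 − d·ε). -/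
/-!
Cauchy–Schwarz over the `d²` index pairs bounds the bilinear form of `Δ` by `d ε ‖u‖ ‖v‖`.
Hence `A + Δ` is coercive with constant `1 - d ε`, which gives positive definiteness and
`‖(A + Δ)⁻¹ φ‖ ≤ ‖φ‖ / (1 - d ε)`, while `A ≥ 1` gives `‖A⁻¹ φ‖ ≤ ‖φ‖`. The resolvent identity
`(A + Δ)⁻¹ - A⁻¹ = -(A + Δ)⁻¹ Δ A⁻¹` turns the last quadratic form into the bilinear form of `Δ`
at these two vectors.
-/

open Matrix Finset

section

variable {ι : Type*} [Fintype ι]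

lemma EuclideanSpace.dotProduct_ofLp_self (x : EuclideanSpace ℝ ι) :
    x.ofLp ⬝ᵥ x.ofLp = ‖x‖ ^ 2 := by
  rw [← real_inner_self_eq_norm_sq, inner_eq_star_dotProduct, star_trivial]

lemma EuclideanSpace.dotProduct_ofLp_le (x y : EuclideanSpace ℝ ι) :
    x.ofLp ⬝ᵥ y.ofLp ≤ ‖x‖ * ‖y‖ := by
  rw [dotProduct_comm, ← star_trivial x.ofLp, ← inner_eq_star_dotProduct]
  exact real_inner_le_norm x y

lemma Matrix.abs_dotProduct_mulVec_le_of_abs_le {Δ : Matrix ι ι ℝ} {ε : ℝ} (hε : 0 ≤ ε)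
    (hΔ : ∀ i j, |Δ i j| ≤ ε) (u v : EuclideanSpace ℝ ι) :
    |u.ofLp ⬝ᵥ Δ *ᵥ v.ofLp| ≤ Fintype.card ι * ε * (‖u‖ * ‖v‖) := by
  have hexpand : u.ofLp ⬝ᵥ Δ *ᵥ v.ofLp = ∑ p : ι × ι, (u p.1 * Δ p.1 p.2) * v p.2 := by
    simp only [dotProduct, mulVec, Fintype.sum_prod_type, mul_sum, mul_assoc]
  have hleft : ∑ p : ι × ι, (u p.1 * Δ p.1 p.2) ^ 2 ≤ Fintype.card ι * ε ^ 2 * ‖u‖ ^ 2 :=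
    calc ∑ p : ι × ι, (u p.1 * Δ p.1 p.2) ^ 2 ≤ ∑ p : ι × ι, u p.1 ^ 2 * ε ^ 2 := by
          gcongr with p
          rw [mul_pow]
          exact mul_le_mul_of_nonneg_left (sq_le_sq' (abs_le.mp (hΔ _ _)).1 (abs_le.mp (hΔ _ _)).2)
            (sq_nonneg _)
      _ = Fintype.card ι * ε ^ 2 * ‖u‖ ^ 2 := by
          simp only [Fintype.sum_prod_type, sum_const, card_univ, nsmul_eq_mul,
            EuclideanSpace.real_norm_sq_eq, mul_sum]
          exact sum_congr rfl fun _ _ => by ring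
  have hright : ∑ p : ι × ι, v p.2 ^ 2 = Fintype.card ι * ‖v‖ ^ 2 := by
    simp [Fintype.sum_prod_type, EuclideanSpace.real_norm_sq_eq]
  refine abs_le_of_sq_le_sq ?_ (by positivity)
  calc (u.ofLp ⬝ᵥ Δ *ᵥ v.ofLp) ^ 2
      ≤ (∑ p : ι × ι, (u p.1 * Δ p.1 p.2) ^ 2) * ∑ p : ι × ι, v p.2 ^ 2 :=
        hexpand ▸ sum_mul_sq_le_sq_mul_sq _ _ _
    _ ≤ (Fintype.card ι * ε ^ 2 * ‖u‖ ^ 2) * (Fintype.card ι * ‖v‖ ^ 2) := by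
        rw [hright]; gcongr
    _ = (Fintype.card ι * ε * (‖u‖ * ‖v‖)) ^ 2 := by ring

lemma Matrix.norm_sq_le_dotProduct_mulVec_of_posSemidef_sub_one {A : Matrix ι ι ℝ}
    [DecidableEq ι] (hA : (A - 1).PosSemidef) (x : EuclideanSpace ℝ ι) :
    ‖x‖ ^ 2 ≤ x.ofLp ⬝ᵥ A *ᵥ x.ofLp := by
  have := hA.dotProduct_mulVec_nonneg x.ofLp
  rw [star_trivial, sub_mulVec, one_mulVec, dotProduct_sub,
    EuclideanSpace.dotProduct_ofLp_self] at this
  linarith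

lemma Matrix.posDef_of_coercive {M : Matrix ι ι ℝ} {c : ℝ} (hM : M.IsHermitian) (hc : 0 < c)
    (hcoer : ∀ x : EuclideanSpace ℝ ι, c * ‖x‖ ^ 2 ≤ x.ofLp ⬝ᵥ M *ᵥ x.ofLp) : M.PosDef := by
  refine .of_dotProduct_mulVec_pos hM fun x hx => ?_
  have hpos : 0 < ‖WithLp.toLp 2 x‖ := by simpa using hx
  rw [star_trivial]
  exact (mul_pos hc (pow_pos hpos 2)).trans_le (hcoer (WithLp.toLp 2 x))

lemma Matrix.norm_inv_mulVec_le_of_coercive [DecidableEq ι] {M : Matrix ι ι ℝ} {c : ℝ}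
    (hc : 0 < c) (hcoer : ∀ x : EuclideanSpace ℝ ι, c * ‖x‖ ^ 2 ≤ x.ofLp ⬝ᵥ M *ᵥ x.ofLp)
    (hM : IsUnit M) (y : EuclideanSpace ℝ ι) :
    ‖WithLp.toLp 2 (M⁻¹ *ᵥ y.ofLp)‖ ≤ ‖y‖ / c := by
  set x := WithLp.toLp 2 (M⁻¹ *ᵥ y.ofLp)
  have hMx : M *ᵥ x.ofLp = y.ofLp := by
    rw [mulVec_mulVec, mul_nonsing_inv _ ((isUnit_iff_isUnit_det M).mp hM), one_mulVec]
  have hsq : c * ‖x‖ * ‖x‖ ≤ ‖y‖ * ‖x‖ := by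
    have := (hcoer x).trans (hMx ▸ EuclideanSpace.dotProduct_ofLp_le x y)
    linarith
  rw [le_div_iff₀' hc]
  rcases (norm_nonneg x).eq_or_lt with hx | hx
  · rw [← hx, mul_zero]; exact norm_nonneg y
  · exact le_of_mul_le_mul_right hsq hx

lemma Matrix.dotProduct_inv_sub_inv_mulVec {R : Type*} [CommRing R] [DecidableEq ι]
    {A B : Matrix ι ι R} (hB : B.IsSymm) (hAB : IsUnit B ↔ IsUnit A) (v : ι → R) :
    v ⬝ᵥ (B⁻¹ - A⁻¹) *ᵥ v = B⁻¹ *ᵥ v ⬝ᵥ (A - B) *ᵥ A⁻¹ *ᵥ v := by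
  rw [inv_sub_inv hAB, ← mulVec_mulVec, ← mulVec_mulVec, dotProduct_mulVec, ← mulVec_transpose,
    transpose_nonsing_inv, hB.eq]

end

theorem matrix_perturbation_general
    (d : ℕ) (A Δ : Matrix (Fin d) (Fin d) ℝ) (ε : ℝ)
    (hA : (A - 1).PosSemidef)
    (hΔsymm : Δ.IsSymm) (hΔ : ∀ i j, |Δ i j| ≤ ε)
    (hε : 0 < ε) (hdε : (d : ℝ) * ε < 1) :
    (A + Δ).PosDef ∧
      ∀ φ : EuclideanSpace ℝ (Fin d), ‖φ‖ ≤ 1 →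
        |φ ⬝ᵥ Δ.mulVec φ| ≤ (d : ℝ) * ε ∧
        |φ ⬝ᵥ ((A + Δ)⁻¹ - A⁻¹).mulVec φ| ≤ (d : ℝ) * ε / (1 - (d : ℝ) * ε) := by
  have hΔform (u v : EuclideanSpace ℝ (Fin d)) :
      |u.ofLp ⬝ᵥ Δ *ᵥ v.ofLp| ≤ d * ε * (‖u‖ * ‖v‖) := by
    simpa using abs_dotProduct_mulVec_le_of_abs_le hε.le hΔ u v
  have hc : 0 < 1 - (d : ℝ) * ε := by linarith
  have hAform := norm_sq_le_dotProduct_mulVec_of_posSemidef_sub_one hA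
  have hBform (x : EuclideanSpace ℝ (Fin d)) :
      (1 - d * ε) * ‖x‖ ^ 2 ≤ x.ofLp ⬝ᵥ (A + Δ) *ᵥ x.ofLp := by
    rw [add_mulVec, dotProduct_add]
    linarith [hAform x, neg_abs_le (x.ofLp ⬝ᵥ Δ *ᵥ x.ofLp), hΔform x x]
  have hApd : A.PosDef := by simpa using PosDef.posSemidef_add hA PosDef.one
  have hBpd : (A + Δ).PosDef :=
    posDef_of_coercive (hApd.isHermitian.add (isHermitian_iff_isSymm.mpr hΔsymm)) hc hBform
  refine ⟨hBpd, fun φ hφ => ⟨?_, ?_⟩⟩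
  · calc |φ.ofLp ⬝ᵥ Δ *ᵥ φ.ofLp| ≤ d * ε * (‖φ‖ * ‖φ‖) := hΔform φ φ
      _ ≤ d * ε * (1 * 1) := by gcongr
      _ = d * ε := by ring
  · have hw := norm_inv_mulVec_le_of_coercive hc hBform hBpd.isUnit φ
    have hu := norm_inv_mulVec_le_of_coercive one_pos (by simpa using hAform) hApd.isUnit φ
    rw [dotProduct_inv_sub_inv_mulVec (isHermitian_iff_isSymm.mp hBpd.isHermitian)
      (iff_of_true hBpd.isUnit hApd.isUnit), sub_add_cancel_left, neg_mulVec, dotProduct_neg,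
      abs_neg]
    calc _ ≤ d * ε * (‖WithLp.toLp 2 ((A + Δ)⁻¹ *ᵥ φ.ofLp)‖ * ‖WithLp.toLp 2 (A⁻¹ *ᵥ φ.ofLp)‖) :=
          hΔform _ _
      _ ≤ d * ε * (1 / (1 - d * ε) * 1) := by
          gcongr
          · exact hw.trans (div_le_div_of_nonneg_right hφ hc.le)
          · simpa using hu.trans (div_le_div_of_nonneg_right hφ zero_le_one)
      _ = d * ε / (1 - d * ε) := by ring

/-- Matrix perturbation: if `A ⪰ I` is real symmetric, `Δ` is real symmetric with
entries bounded by `ε` where `d·ε < 1`, then `A + Δ` is positive definite, and for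
every unit-norm vector `φ`, `|φᵀ Δ φ| ≤ d ε` and
`|φᵀ((A+Δ)⁻¹ - A⁻¹)φ| ≤ d ε / (1 - d ε)`. -/
theorem matrix_perturbation
    (d : ℕ) (A Δ : Matrix (Fin d) (Fin d) ℝ) (ε : ℝ)
    (hAsymm : A.IsSymm) (hA : (A - 1).PosSemidef)
    (hΔsymm : Δ.IsSymm) (hΔ : ∀ i j, |Δ i j| ≤ ε)
    (hε : 0 < ε) (hdε : (d : ℝ) * ε < 1) :
    (A + Δ).PosDef ∧
      ∀ φ : EuclideanSpace ℝ (Fin d), ‖φ‖ ≤ 1 →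
        |φ ⬝ᵥ Δ.mulVec φ| ≤ (d : ℝ) * ε ∧
        |φ ⬝ᵥ ((A + Δ)⁻¹ - A⁻¹).mulVec φ| ≤ (d : ℝ) * ε / (1 - (d : ℝ) * ε) :=
  matrix_perturbation_general d A Δ ε hA hΔsymm hΔ hε hdε
end

section
/- Let λ > 0 and let A be a real symmetric d×d matrix such that A − λI is positive semidefinite. Then for every c > 0, every real n ≥ 1, and every φ ∈ ℝ^d with ‖φ‖ ≤ 1, φᵀ (cI + nA)^{-1} φ ≤ ((λ + c)/(λn + c)) · φᵀ (cI + A)^{-1} φ. -/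
/-!
With `k = (λ + c) / (λn + c)` one has `k (cI + nA) - (cI + A) = c (n - 1) / (λn + c) • (A - λI) ⪰ 0`,
so `cI + A ⪯ k (cI + nA)` in the Loewner order, and inversion reverses the Loewner order between
positive definite matrices.
-/

open Matrix

namespace Matrix

variable {n K : Type*} [Field K] [PartialOrder K] [StarRing K] [StarOrderedRing K]

theorem PosSemidef.posDef_smul_one_add [DecidableEq n] [PosMulStrictMono K] {A : Matrix n n K}
    {lam c : K} (hA : (A - lam • 1).PosSemidef) (h : 0 < c + lam) : (c • 1 + A).PosDef := by
  have hsplit : c • 1 + A = (c + lam) • (1 : Matrix n n K) + (A - lam • 1) := by module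
  rw [hsplit]
  exact (PosDef.one.smul h).add_posSemidef hA

variable [Fintype n]

theorem PosSemidef.dotProduct_mulVec_le {M N : Matrix n n K} (h : (N - M).PosSemidef)
    (x : n → K) : star x ⬝ᵥ M *ᵥ x ≤ star x ⬝ᵥ N *ᵥ x := by
  simpa [sub_mulVec, dotProduct_sub] using h.dotProduct_mulVec_nonneg x

theorem PosDef.posSemidef_inv_sub_inv [DecidableEq n] {X Y : Matrix n n K} (hX : X.PosDef)
    (hXY : (Y - X).PosSemidef) : (X⁻¹ - Y⁻¹).PosSemidef := by
  have hY : Y.PosDef := by simpa using hX.add_posSemidef hXY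
  have := hY.isUnit.invertible
  have := hX.isUnit.invertible
  have := hX.inv.isUnit.invertible
  -- `fromBlocks Y 1 1 X⁻¹` has the Schur complements `X⁻¹ - Y⁻¹` and `Y - X`.
  have h₁₁ := hY.fromBlocks₁₁ 1 X⁻¹
  have h₂₂ := hX.inv.fromBlocks₂₂ Y 1
  simp only [conjTranspose_one, Matrix.one_mul, Matrix.mul_one, Matrix.inv_inv_of_invertible]
    at h₁₁ h₂₂
  exact h₁₁.mp (h₂₂.mpr hXY)

end Matrix

theorem quadForm_inv_smul_le_general
    (d : ℕ) (lam : ℝ) (hlam : 0 < lam)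
    (A : Matrix (Fin d) (Fin d) ℝ)
    (hA : (A - lam • (1 : Matrix (Fin d) (Fin d) ℝ)).PosSemidef) :
    ∀ c : ℝ, 0 < c → ∀ n : ℝ, 1 ≤ n →
      ∀ φ : EuclideanSpace ℝ (Fin d), ‖φ‖ ≤ 1 →
        φ ⬝ᵥ ((c • (1 : Matrix (Fin d) (Fin d) ℝ) + n • A)⁻¹).mulVec φ ≤
          ((lam + c) / (lam * n + c)) *
            (φ ⬝ᵥ ((c • (1 : Matrix (Fin d) (Fin d) ℝ) + A)⁻¹).mulVec φ) := by
  intro c hc n hn φ _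
  set B := c • (1 : Matrix (Fin d) (Fin d) ℝ) + n • A
  set C := c • (1 : Matrix (Fin d) (Fin d) ℝ) + A
  set k := (lam + c) / (lam * n + c)
  have hk : 0 < k := by positivity
  have hC : C.PosDef := hA.posDef_smul_one_add (by positivity)
  have hB : B.PosDef := by
    refine PosSemidef.posDef_smul_one_add (lam := n * lam) ?_ (by positivity)
    simpa [smul_sub, smul_smul] using hA.smul (by positivity : 0 ≤ n)
  have hCB : (k • B - C).PosSemidef := by
    have hdiff : k • B - C = (c * (n - 1) / (lam * n + c)) • (A - lam • 1) := by
      simp only [B, C, k]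
      match_scalars <;> field_simp <;> ring
    rw [hdiff]
    exact hA.smul (div_nonneg (mul_nonneg hc.le (sub_nonneg.2 hn)) (by positivity))
  have hinv : (k • C⁻¹ - B⁻¹).PosSemidef := by
    have hkB : (k • B)⁻¹ = k⁻¹ • B⁻¹ := by
      have := invertibleOfNonzero hk.ne'
      rw [Matrix.inv_smul B k ((isUnit_iff_isUnit_det B).1 hB.isUnit), invOf_eq_inv]
    have h := (hC.posSemidef_inv_sub_inv hCB).smul hk.le
    rwa [hkB, smul_sub, smul_smul, mul_inv_cancel₀ hk.ne', one_smul] at h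
  simpa [smul_mulVec] using hinv.dotProduct_mulVec_le φ.ofLp

/-- If `A ⪰ λ I` with `λ > 0`, then for every `c > 0`, real `n ≥ 1`, and unit-norm
vector `φ`, `φᵀ(cI + nA)⁻¹φ ≤ ((λ + c)/(λ n + c)) · φᵀ(cI + A)⁻¹φ`. -/
theorem quadForm_inv_smul_le
    (d : ℕ) (lam : ℝ) (hlam : 0 < lam)
    (A : Matrix (Fin d) (Fin d) ℝ)
    (hAsymm : A.IsSymm)
    (hA : (A - lam • (1 : Matrix (Fin d) (Fin d) ℝ)).PosSemidef) :
    ∀ c : ℝ, 0 < c → ∀ n : ℝ, 1 ≤ n →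
      ∀ φ : EuclideanSpace ℝ (Fin d), ‖φ‖ ≤ 1 →
        φ ⬝ᵥ ((c • (1 : Matrix (Fin d) (Fin d) ℝ) + n • A)⁻¹).mulVec φ ≤
          ((lam + c) / (lam * n + c)) *
            (φ ⬝ᵥ ((c • (1 : Matrix (Fin d) (Fin d) ℝ) + A)⁻¹).mulVec φ) :=
  quadForm_inv_smul_le_general d lam hlam A hA
end

section
/- Let S be a nonempty set, 𝒜 a finite nonempty set, and φ : S × 𝒜 → ℝ^d a map with ‖φ(s,a)‖ ≤ 1 for all (s,a). Let ε₀ > 0, let w, w̄ ∈ ℝ^d satisfy ‖w − w̄‖ ≤ ε₀/2, and let Σ, Σ̄ be real symmetric positive semidefinite d×d matrices with ‖Σ − Σ̄‖_F ≤ ε₀²/4. Define Q(s,a) = min{ wᵀφ(s,a) + √(φ(s,a)ᵀ Σ φ(s,a)), 1 } and Q̄(s,a) = min{ w̄ᵀφ(s,a) + √(φ(s,a)ᵀ Σ̄ φ(s,a)), 1 }, and for each s ∈ S let π(s) ∈ 𝒜 maximize a ↦ Q(s,a) and π̄(s) ∈ 𝒜 maximize a ↦ Q̄(s,a). Then: (i)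 |Q(s,a) − Q̄(s,a)| ≤ ε₀ for all (s,a); (ii) |max_{a} Q(s,a) − max_{a} Q̄(s,a)| ≤ ε₀ for all s; and (iii) |Q(s,π(s)) − Q(s,π̄(s))| ≤ 2ε₀ for all s ∈ S. -/
/-!
The linear part moves by at most `‖w - w̄‖ ‖φ‖ ≤ ε₀/2`. The quadratic form moves by at most
`‖Σ - Σ̄‖_F ‖φ‖² ≤ ε₀²/4`, and since `|√u - √v| ≤ √|u - v|` the exploration bonus moves by at
most `ε₀/2`. Clipping at `1` is `1`-Lipschitz, so `Q` and `Q̄` are uniformly `ε₀`-close, and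
uniform closeness passes to maxima over actions; comparing both greedy actions through `Q̄`
costs `ε₀` twice.
-/

open Matrix

namespace Real

theorem sqrt_le_sqrt_add_sqrt_abs_sub {a b : ℝ} (hb : 0 ≤ b) : √a ≤ √b + √|a - b| := by
  rw [sqrt_le_iff]
  refine ⟨by positivity, ?_⟩
  nlinarith [sq_sqrt hb, sq_sqrt (abs_nonneg (a - b)), le_abs_self (a - b),
    mul_nonneg (sqrt_nonneg b) (sqrt_nonneg |a - b|)]

theorem abs_sqrt_sub_sqrt_le_sqrt_abs_sub {a b : ℝ} (ha : 0 ≤ a) (hb : 0 ≤ b) :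
    |√a - √b| ≤ √|a - b| := by
  rw [abs_sub_le_iff]
  constructor
  · linarith [sqrt_le_sqrt_add_sqrt_abs_sub (a := a) hb]
  · linarith [abs_sub_comm a b ▸ sqrt_le_sqrt_add_sqrt_abs_sub (a := b) ha]

end Real

namespace Matrix

open scoped Norms.Frobenius

variable {m n : Type*} [Fintype m] [Fintype n]

theorem frobenius_norm_eq_sqrt_sum_sq (A : Matrix m n ℝ) : ‖A‖ = √(∑ i, ∑ j, A i j ^ 2) := by
  simp only [frobenius_norm_def, Real.norm_eq_abs, Real.rpow_two, sq_abs, Real.sqrt_eq_rpow,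
    one_div]

theorem abs_dotProduct_mulVec_le (N : Matrix n n ℝ) (x : EuclideanSpace ℝ n) :
    |x ⬝ᵥ N *ᵥ x| ≤ ‖N‖ * ‖x‖ ^ 2 := by
  have hquad : replicateRow Unit x.ofLp * N * replicateCol Unit x.ofLp
      = of fun _ _ => x ⬝ᵥ N *ᵥ x := by
    rw [Matrix.mul_assoc, ← replicateCol_mulVec, replicateRow_mul_replicateCol]
  calc |x ⬝ᵥ N *ᵥ x| = ‖replicateRow Unit x.ofLp * N * replicateCol Unit x.ofLp‖ := by
        simp [hquad, frobenius_norm_eq_sqrt_sum_sq, Real.sqrt_sq_eq_abs]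
    _ ≤ ‖replicateRow Unit x.ofLp‖ * ‖N‖ * ‖replicateCol Unit x.ofLp‖ := by
        grw [frobenius_norm_mul, frobenius_norm_mul]
    _ = ‖N‖ * ‖x‖ ^ 2 := by
        simp only [frobenius_norm_replicateRow, frobenius_norm_replicateCol, WithLp.toLp_ofLp]
        ring

end Matrix

theorem EuclideanSpace.abs_dotProduct_sub_dotProduct_le {n : Type*} [Fintype n]
    (w w' x : EuclideanSpace ℝ n) : |w ⬝ᵥ x - w' ⬝ᵥ x| ≤ ‖w - w'‖ * ‖x‖ := by
  have : w ⬝ᵥ x - w' ⬝ᵥ x = inner ℝ x (w - w') := by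
    rw [EuclideanSpace.inner_eq_star_dotProduct, ← sub_dotProduct]
    simp [dotProduct_comm]
  rw [this, mul_comm]
  exact abs_real_inner_le_norm x (w - w')

open scoped Matrix.Norms.Frobenius in
theorem abs_dotProduct_add_sqrt_quadratic_sub_le {n : Type*} [Fintype n]
    {x w w' : EuclideanSpace ℝ n} (hx : ‖x‖ ≤ 1) {M M' : Matrix n n ℝ}
    (hM : M.PosSemidef) (hM' : M'.PosSemidef) {δ η : ℝ}
    (hw : ‖w - w'‖ ≤ δ) (hMM' : ‖M - M'‖ ≤ η ^ 2) (hη : 0 ≤ η) :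
    |(w ⬝ᵥ x + √(x ⬝ᵥ M *ᵥ x)) - (w' ⬝ᵥ x + √(x ⬝ᵥ M' *ᵥ x))| ≤ δ + η := by
  have hlinear : |w ⬝ᵥ x - w' ⬝ᵥ x| ≤ δ := by
    grw [EuclideanSpace.abs_dotProduct_sub_dotProduct_le, hx, mul_one, hw]
  have hquadratic : |x ⬝ᵥ M *ᵥ x - x ⬝ᵥ M' *ᵥ x| ≤ η ^ 2 := by
    rw [← dotProduct_sub, ← sub_mulVec]
    grw [abs_dotProduct_mulVec_le, hMM', hx, one_pow, mul_one]
  have hbonus : |√(x ⬝ᵥ M *ᵥ x) - √(x ⬝ᵥ M' *ᵥ x)| ≤ η := by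
    grw [Real.abs_sqrt_sub_sqrt_le_sqrt_abs_sub (by simpa using hM.dotProduct_mulVec_nonneg x)
      (by simpa using hM'.dotProduct_mulVec_nonneg x), hquadratic, Real.sqrt_sq hη]
  calc _ = |(w ⬝ᵥ x - w' ⬝ᵥ x) + (√(x ⬝ᵥ M *ᵥ x) - √(x ⬝ᵥ M' *ᵥ x))| := by
        congr 1; ring
    _ ≤ δ + η := (abs_add_le _ _).trans (add_le_add hlinear hbonus)

section Greedy

variable {α : Type*} {f g : α → ℝ} {ε : ℝ} {a b : α}

theorem abs_sub_of_maximizers_le (hfg : ∀ c, |f c - g c| ≤ ε) (ha : ∀ c, f c ≤ f a)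
    (hb : ∀ c, g c ≤ g b) : |f a - g b| ≤ ε := by
  obtain ⟨-, hga⟩ := abs_le.1 (hfg a)
  obtain ⟨hgb, -⟩ := abs_le.1 (hfg b)
  exact abs_le.2 ⟨by linarith [ha b], by linarith [hb a]⟩

theorem abs_sub_at_maximizers_le (hfg : ∀ c, |f c - g c| ≤ ε) (ha : ∀ c, f c ≤ f a)
    (hb : ∀ c, g c ≤ g b) : |f a - f b| ≤ 2 * ε :=
  calc |f a - f b| ≤ |f a - g b| + |g b - f b| := abs_sub_le _ _ _
    _ ≤ ε + ε := add_le_add (abs_sub_of_maximizers_le hfg ha hb) (abs_sub_comm (f b) _ ▸ hfg b)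
    _ = 2 * ε := by ring

end Greedy

theorem discretized_Q_close_general
    (d : ℕ) (S : Type*) (A : Type*)
    (φ : S × A → EuclideanSpace ℝ (Fin d))
    (hφ : ∀ p, ‖φ p‖ ≤ 1)
    (ε₀ : ℝ) (hε₀ : 0 < ε₀)
    (w w' : EuclideanSpace ℝ (Fin d)) (hw : ‖w - w'‖ ≤ ε₀ / 2)
    (M M' : Matrix (Fin d) (Fin d) ℝ)
    (hM : M.PosSemidef)
    (hM' : M'.PosSemidef)
    (hF : Real.sqrt (∑ i, ∑ j, (M i j - M' i j) ^ 2) ≤ ε₀ ^ 2 / 4)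
    (Q Q' : S → A → ℝ)
    (hQ : ∀ s a, Q s a =
      min (w ⬝ᵥ φ (s, a) + Real.sqrt (φ (s, a) ⬝ᵥ M.mulVec (φ (s, a)))) 1)
    (hQ' : ∀ s a, Q' s a =
      min (w' ⬝ᵥ φ (s, a) + Real.sqrt (φ (s, a) ⬝ᵥ M'.mulVec (φ (s, a)))) 1)
    (π π' : S → A)
    (hπ : ∀ s a, Q s a ≤ Q s (π s))
    (hπ' : ∀ s a, Q' s a ≤ Q' s (π' s)) :
    (∀ s a, |Q s a - Q' s a| ≤ ε₀) ∧
    (∀ s, |Q s (π s) - Q' s (π' s)| ≤ ε₀) ∧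
    (∀ s, |Q s (π s) - Q s (π' s)| ≤ 2 * ε₀) := by
  open scoped Matrix.Norms.Frobenius in
  have hMM' : ‖M - M'‖ ≤ (ε₀ / 2) ^ 2 :=
    calc ‖M - M'‖ = √(∑ i, ∑ j, (M i j - M' i j) ^ 2) := frobenius_norm_eq_sqrt_sum_sq _
      _ ≤ ε₀ ^ 2 / 4 := hF
      _ = (ε₀ / 2) ^ 2 := by ring
  have hQQ' (s : S) (a : A) : |Q s a - Q' s a| ≤ ε₀ := by
    rw [hQ, hQ']
    refine (abs_min_sub_min_le_max _ _ _ _).trans (max_le ?_ (by simpa using hε₀.le))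
    linarith [abs_dotProduct_add_sqrt_quadratic_sub_le (hφ (s, a)) hM hM' hw hMM' (by positivity)]
  exact ⟨hQQ', fun s => abs_sub_of_maximizers_le (hQQ' s) (hπ s) (hπ' s),
    fun s => abs_sub_at_maximizers_le (hQQ' s) (hπ s) (hπ' s)⟩

/-- Discretization error for greedy Q-functions: if `‖w − w'‖ ≤ ε₀/2` and the
Frobenius distance between the PSD matrices `M` (playing the role of `Σ`) and `M'`
(playing the role of `Σ̄`) is at most `ε₀²/4`, then the clipped Q-functions
`Q(s,a) = min(wᵀφ(s,a) + √(φ(s,a)ᵀ M φ(s,a)), 1)` and its discretized counterpart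
`Q'` are `ε₀`-close, their maxima over actions are `ε₀`-close, and the greedy
policies `π`, `π'` satisfy `|Q(s,π(s)) − Q(s,π'(s))| ≤ 2ε₀`. -/
theorem discretized_Q_close
    (d : ℕ) (S : Type*) (A : Type*) [Nonempty S] [Fintype A] [Nonempty A]
    (φ : S × A → EuclideanSpace ℝ (Fin d))
    (hφ : ∀ p, ‖φ p‖ ≤ 1)
    (ε₀ : ℝ) (hε₀ : 0 < ε₀)
    (w w' : EuclideanSpace ℝ (Fin d)) (hw : ‖w - w'‖ ≤ ε₀ / 2)
    (M M' : Matrix (Fin d) (Fin d) ℝ)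
    (hMsymm : M.IsSymm) (hM : M.PosSemidef)
    (hM'symm : M'.IsSymm) (hM' : M'.PosSemidef)
    (hF : Real.sqrt (∑ i, ∑ j, (M i j - M' i j) ^ 2) ≤ ε₀ ^ 2 / 4)
    (Q Q' : S → A → ℝ)
    (hQ : ∀ s a, Q s a =
      min (w ⬝ᵥ φ (s, a) + Real.sqrt (φ (s, a) ⬝ᵥ M.mulVec (φ (s, a)))) 1)
    (hQ' : ∀ s a, Q' s a =
      min (w' ⬝ᵥ φ (s, a) + Real.sqrt (φ (s, a) ⬝ᵥ M'.mulVec (φ (s, a)))) 1)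
    (π π' : S → A)
    (hπ : ∀ s a, Q s a ≤ Q s (π s))
    (hπ' : ∀ s a, Q' s a ≤ Q' s (π' s)) :
    (∀ s a, |Q s a - Q' s a| ≤ ε₀) ∧
    (∀ s, |Q s (π s) - Q' s (π' s)| ≤ ε₀) ∧
    (∀ s, |Q s (π s) - Q s (π' s)| ≤ 2 * ε₀) :=
  discretized_Q_close_general d S A φ hφ ε₀ hε₀ w w' hw M M' hM hM' hF Q Q' hQ hQ' π π' hπ hπ'
end

section
/- Let c > 0, let A be a real symmetric positive semidefinite d×d matrix, and let P be a nonempty family of Borel probability measures on ℝ^d, each supported on the closed unit ball {φ : ‖φ‖ ≤ 1}. Define ν = inf_{θ ∈ ℝ^d, ‖θ‖ = 1} sup_{μ ∈ P} √( ∫ (φᵀθ)² dμ(φ) ). Suppose ε̃ > 0 satisfies sup_{μ ∈ P} ∫ √( φᵀ (cI + A)^{-1} φ ) dμ(φ) ≤ ε̃ and ε̃ ≤ ν²/(2√c). Then for every real n ≥ 1, sup_{μ ∈ P} ∫ √( φᵀ (cI + nA)^{-1} φ ) dμ(φ) ≤ √( 2·ε̃/( √c · (1 + n) ) ). -/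
/-!
Write `M = cI + A`. On the unit ball, Cauchy–Schwarz for the inner product of `M⁻¹` gives
`(φᵀθ)² ≤ |φᵀθ| ≤ √(θᵀMθ) · √(φᵀM⁻¹φ)`, so `ν² ≤ √(θᵀMθ) · ε̃` for every unit `θ`. Together with
`ε̃ ≤ ν²/(2√c)` this forces `θᵀMθ ≥ 4c`, i.e. `A ⪰ 3cI ⪰ cI`. Then
`cI + nA ⪰ ((1 + n)/2)(cI + A)`, and as inversion is antitone in the Loewner order, the integrand
for `n` is at most `√(2/(1 + n))` times the one for `n = 1`. Finally `ν ≤ 1` gives `√c · ε̃ ≤ 1/2`,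
which turns `√(2/(1 + n)) · ε̃` into the claimed bound.
-/

open Matrix MeasureTheory

namespace Matrix

variable {n : Type*} [Fintype n]

theorem PosSemidef.dotProduct_mulVec_sq_le {B : Matrix n n ℝ} (hB : B.PosSemidef) (x y : n → ℝ) :
    (x ⬝ᵥ B *ᵥ y) ^ 2 ≤ (x ⬝ᵥ B *ᵥ x) * (y ⬝ᵥ B *ᵥ y) := by
  let := B.toSeminormedAddCommGroup hB
  let := B.toInnerProductSpace hB
  -- the inner product induced by `B` is `⟪x, y⟫ = (B *ᵥ y) ⬝ᵥ star x`
  have h := real_inner_mul_inner_self_le x y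
  change ((B *ᵥ y) ⬝ᵥ star x) * ((B *ᵥ y) ⬝ᵥ star x)
    ≤ ((B *ᵥ x) ⬝ᵥ star x) * ((B *ᵥ y) ⬝ᵥ star y) at h
  simpa only [star_trivial, dotProduct_comm (B *ᵥ _), sq] using h

variable [DecidableEq n]

theorem dotProduct_smul_one_add_smul_mulVec (c t : ℝ) (A : Matrix n n ℝ) (x : n → ℝ) :
    x ⬝ᵥ (c • (1 : Matrix n n ℝ) + t • A) *ᵥ x = c * (x ⬝ᵥ x) + t * (x ⬝ᵥ A *ᵥ x) := by
  simp [add_mulVec, smul_mulVec, dotProduct_add]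

theorem dotProduct_smul_one_add_mulVec (c : ℝ) (A : Matrix n n ℝ) (x : n → ℝ) :
    x ⬝ᵥ (c • (1 : Matrix n n ℝ) + A) *ᵥ x = c * (x ⬝ᵥ x) + x ⬝ᵥ A *ᵥ x := by
  simpa using dotProduct_smul_one_add_smul_mulVec c 1 A x

theorem PosDef.mulVec_inv_mulVec {M : Matrix n n ℝ} (hM : M.PosDef) (x : n → ℝ) :
    M *ᵥ M⁻¹ *ᵥ x = x := by
  rw [mulVec_mulVec, mul_nonsing_inv _ (M.isUnit_iff_isUnit_det.mp hM.isUnit), one_mulVec]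

theorem PosDef.inv_mulVec_mulVec {M : Matrix n n ℝ} (hM : M.PosDef) (x : n → ℝ) :
    M⁻¹ *ᵥ M *ᵥ x = x := by
  rw [mulVec_mulVec, nonsing_inv_mul _ (M.isUnit_iff_isUnit_det.mp hM.isUnit), one_mulVec]

theorem PosDef.sq_dotProduct_le {M : Matrix n n ℝ} (hM : M.PosDef) (x y : n → ℝ) :
    (x ⬝ᵥ y) ^ 2 ≤ (x ⬝ᵥ M⁻¹ *ᵥ x) * (y ⬝ᵥ M *ᵥ y) := by
  have h := hM.inv.posSemidef.dotProduct_mulVec_sq_le x (M *ᵥ y)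
  rwa [hM.inv_mulVec_mulVec, dotProduct_comm (M *ᵥ y)] at h

theorem PosDef.mul_dotProduct_inv_mulVec_le {B C : Matrix n n ℝ} (hB : B.PosDef) (hC : C.PosDef)
    {k : ℝ} (hk : 0 ≤ k) (hBC : ∀ u, k * (u ⬝ᵥ B *ᵥ u) ≤ u ⬝ᵥ C *ᵥ u) (x : n → ℝ) :
    k * (x ⬝ᵥ C⁻¹ *ᵥ x) ≤ x ⬝ᵥ B⁻¹ *ᵥ x := by
  -- with `u = C⁻¹x`, `xᵀC⁻¹x = xᵀu = uᵀCu`, and Cauchy–Schwarz bounds `(xᵀu)²` by `(xᵀB⁻¹x)(uᵀBu)`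
  set u := C⁻¹ *ᵥ x
  have hq : x ⬝ᵥ u = u ⬝ᵥ C *ᵥ u := by rw [hC.mulVec_inv_mulVec, dotProduct_comm]
  have hq0 : 0 ≤ x ⬝ᵥ u := by simpa using hC.inv.posSemidef.dotProduct_mulVec_nonneg x
  have hp0 : 0 ≤ x ⬝ᵥ B⁻¹ *ᵥ x := by simpa using hB.inv.posSemidef.dotProduct_mulVec_nonneg x
  have hCS := hB.sq_dotProduct_le x u
  have hkq : k * (x ⬝ᵥ u) ^ 2 ≤ (x ⬝ᵥ B⁻¹ *ᵥ x) * (x ⬝ᵥ u) :=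
    calc k * (x ⬝ᵥ u) ^ 2 ≤ k * ((x ⬝ᵥ B⁻¹ *ᵥ x) * (u ⬝ᵥ B *ᵥ u)) := by gcongr
      _ = (x ⬝ᵥ B⁻¹ *ᵥ x) * (k * (u ⬝ᵥ B *ᵥ u)) := by ring
      _ ≤ (x ⬝ᵥ B⁻¹ *ᵥ x) * (x ⬝ᵥ u) := by rw [hq]; gcongr; exact hBC u
  rcases hq0.eq_or_lt with h0 | hpos
  · rw [← h0, mul_zero]; exact hp0
  · nlinarith

theorem dotProduct_inv_smul_one_add_smul_mulVec_le {c t : ℝ} (hc : 0 < c) (ht : 1 ≤ t)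
    {A : Matrix n n ℝ} (hA : A.PosSemidef) (hAc : ∀ u, c * (u ⬝ᵥ u) ≤ u ⬝ᵥ A *ᵥ u) (x : n → ℝ) :
    x ⬝ᵥ (c • (1 : Matrix n n ℝ) + t • A)⁻¹ *ᵥ x
      ≤ 2 / (1 + t) * (x ⬝ᵥ (c • (1 : Matrix n n ℝ) + A)⁻¹ *ᵥ x) := by
  have hpos : 0 < (1 + t) / 2 := by linarith
  have key := PosDef.mul_dotProduct_inv_mulVec_le ((PosDef.one.smul hc).add_posSemidef hA)
    ((PosDef.one.smul hc).add_posSemidef (hA.smul (by linarith : (0 : ℝ) ≤ t))) hpos.le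
    (fun u => by
      rw [dotProduct_smul_one_add_mulVec, dotProduct_smul_one_add_smul_mulVec]
      nlinarith [hAc u]) x
  rw [div_mul_eq_mul_div, le_div_iff₀ (by linarith)]
  linarith

end Matrix

section Measure

variable {X : Type*} [MeasurableSpace X] {μ : Measure X}

theorem Continuous.integrable_of_ae_mem_isCompact [TopologicalSpace X] [T2Space X]
    [OpensMeasurableSpace X] [IsFiniteMeasure μ] {E : Type*} [NormedAddCommGroup E]
    {f : X → E} (hf : Continuous f) {K : Set X} (hK : IsCompact K) (hμK : ∀ᵐ x ∂μ, x ∈ K) :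
    Integrable f μ := by
  simpa [IntegrableOn, Measure.restrict_eq_self_of_ae_mem hμK] using
    hf.continuousOn.integrableOn_compact (μ := μ) hK

theorem integral_le_mul_of_ae_le_mul {f g : X → ℝ} {a ε : ℝ} (ha : 0 ≤ a) (hf : 0 ≤ᵐ[μ] f)
    (hg : Integrable g μ) (hfg : ∀ᵐ x ∂μ, f x ≤ a * g x) (hε : ∫ x, g x ∂μ ≤ ε) :
    ∫ x, f x ∂μ ≤ a * ε :=
  calc ∫ x, f x ∂μ ≤ ∫ x, a * g x ∂μ := integral_mono_of_nonneg hf (hg.const_mul a) hfg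
    _ = a * ∫ x, g x ∂μ := integral_const_mul a g
    _ ≤ a * ε := mul_le_mul_of_nonneg_left hε ha

end Measure

namespace EuclideanSpace

variable {ι : Type*} [Fintype ι]

theorem abs_dotProduct_le_norm_mul_norm (x y : EuclideanSpace ℝ ι) :
    |x.ofLp ⬝ᵥ y.ofLp| ≤ ‖x‖ * ‖y‖ := by
  simpa [EuclideanSpace.inner_eq_star_dotProduct, dotProduct_comm] using
    abs_real_inner_le_norm x y

theorem dotProduct_self_eq_norm_sq (x : EuclideanSpace ℝ ι) : x.ofLp ⬝ᵥ x.ofLp = ‖x‖ ^ 2 := by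
  rw [← real_inner_self_eq_norm_sq, EuclideanSpace.inner_eq_star_dotProduct, star_trivial]

theorem continuous_sqrt_dotProduct_mulVec (M : Matrix ι ι ℝ) :
    Continuous fun x : EuclideanSpace ℝ ι => √(x.ofLp ⬝ᵥ M *ᵥ x.ofLp) := by
  simp only [dotProduct, mulVec]
  fun_prop

theorem ae_norm_le_one {μ : Measure (EuclideanSpace ℝ ι)} [IsProbabilityMeasure μ]
    (h : μ {x | ‖x‖ ≤ 1} = 1) : ∀ᵐ x ∂μ, ‖x‖ ≤ 1 :=
  mem_ae_iff.mpr <|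
    (prob_compl_eq_zero_iff (isClosed_le continuous_norm continuous_const).measurableSet).mpr h

theorem integrable_sqrt_dotProduct_mulVec {μ : Measure (EuclideanSpace ℝ ι)}
    [IsProbabilityMeasure μ] (h : μ {x | ‖x‖ ≤ 1} = 1) (M : Matrix ι ι ℝ) :
    Integrable (fun x : EuclideanSpace ℝ ι => √(x.ofLp ⬝ᵥ M *ᵥ x.ofLp)) μ :=
  (continuous_sqrt_dotProduct_mulVec M).integrable_of_ae_mem_isCompact (isCompact_closedBall 0 1)
    (by simpa using ae_norm_le_one h)

theorem le_dotProduct_mulVec_of_forall_norm_eq_one {a : ℝ} {A : Matrix ι ι ℝ}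
    (h : ∀ θ : EuclideanSpace ℝ ι, ‖θ‖ = 1 → a ≤ θ.ofLp ⬝ᵥ A *ᵥ θ.ofLp) (u : ι → ℝ) :
    a * (u ⬝ᵥ u) ≤ u ⬝ᵥ A *ᵥ u := by
  set x := WithLp.toLp 2 u
  rcases eq_or_ne x 0 with hx | hx
  · simp [show u = 0 from congrArg WithLp.ofLp hx]
  · have hθ := h (‖x‖⁻¹ • x) (by simp [norm_smul, hx])
    have hu : u ⬝ᵥ u = ‖x‖ ^ 2 := dotProduct_self_eq_norm_sq x
    simp only [WithLp.ofLp_smul, smul_dotProduct, dotProduct_smul, mulVec_smul, smul_eq_mul] at hθ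
    rw [hu]
    field_simp at hθ
    linarith

end EuclideanSpace

section Reachability

variable {ι : Type*} [Fintype ι]

noncomputable def directionalReach (P : Set (Measure (EuclideanSpace ℝ ι)))
    (θ : EuclideanSpace ℝ ι) : ℝ :=
  ⨆ μ : P, √(∫ φ, (φ.ofLp ⬝ᵥ θ.ofLp) ^ 2 ∂(μ : Measure (EuclideanSpace ℝ ι)))

noncomputable def reachability (P : Set (Measure (EuclideanSpace ℝ ι))) : ℝ :=
  ⨅ θ : {θ : EuclideanSpace ℝ ι // ‖θ‖ = 1}, directionalReach P θ

variable {P : Set (Measure (EuclideanSpace ℝ ι))}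

theorem directionalReach_nonneg (θ : EuclideanSpace ℝ ι) : 0 ≤ directionalReach P θ :=
  Real.iSup_nonneg fun _ => Real.sqrt_nonneg _

theorem reachability_nonneg : 0 ≤ reachability P :=
  Real.iInf_nonneg fun _ => directionalReach_nonneg _

theorem reachability_le_directionalReach {θ : EuclideanSpace ℝ ι} (hθ : ‖θ‖ = 1) :
    reachability P ≤ directionalReach P θ :=
  ciInf_le (f := fun θ : {θ : EuclideanSpace ℝ ι // ‖θ‖ = 1} => directionalReach P θ)
    ⟨0, Set.forall_mem_range.2 fun _ => directionalReach_nonneg _⟩ ⟨θ, hθ⟩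

theorem sq_dotProduct_le_of_norm_le_one {φ θ : EuclideanSpace ℝ ι} (hφ : ‖φ‖ ≤ 1)
    (hθ : ‖θ‖ ≤ 1) : (φ.ofLp ⬝ᵥ θ.ofLp) ^ 2 ≤ |φ.ofLp ⬝ᵥ θ.ofLp| := by
  have h := (EuclideanSpace.abs_dotProduct_le_norm_mul_norm φ θ).trans
    (mul_le_one₀ hφ (norm_nonneg _) hθ)
  rw [← sq_abs]
  exact pow_le_of_le_one (abs_nonneg _) h two_ne_zero

theorem directionalReach_le_one (hprob : ∀ μ ∈ P, IsProbabilityMeasure μ)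
    (hsupp : ∀ μ ∈ P, μ {φ | ‖φ‖ ≤ 1} = 1) {θ : EuclideanSpace ℝ ι} (hθ : ‖θ‖ ≤ 1) :
    directionalReach P θ ≤ 1 := by
  refine Real.iSup_le (fun ⟨μ, hμ⟩ => ?_) zero_le_one
  have := hprob μ hμ
  rw [Real.sqrt_le_one]
  simpa using integral_le_mul_of_ae_le_mul (f := fun φ => (φ.ofLp ⬝ᵥ θ.ofLp) ^ 2)
    zero_le_one (ae_of_all _ fun _ => sq_nonneg _) (integrable_const 1)
    ((EuclideanSpace.ae_norm_le_one (hsupp μ hμ)).mono fun φ hφ => by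
      simpa using (sq_dotProduct_le_of_norm_le_one hφ hθ).trans
        (EuclideanSpace.abs_dotProduct_le_norm_mul_norm φ θ |>.trans
          (mul_le_one₀ hφ (norm_nonneg _) hθ)))
    (by simp)

theorem reachability_le_one (hprob : ∀ μ ∈ P, IsProbabilityMeasure μ)
    (hsupp : ∀ μ ∈ P, μ {φ | ‖φ‖ ≤ 1} = 1) : reachability P ≤ 1 := by
  rcases isEmpty_or_nonempty {θ : EuclideanSpace ℝ ι // ‖θ‖ = 1} with h | ⟨θ, hθ⟩
  · rw [reachability, Real.iInf_of_isEmpty]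
    exact zero_le_one
  · exact (reachability_le_directionalReach hθ).trans
      (directionalReach_le_one hprob hsupp hθ.le)

variable [DecidableEq ι]

theorem sq_dotProduct_le_sqrt_mul_sqrt {M : Matrix ι ι ℝ} (hM : M.PosDef)
    {φ θ : EuclideanSpace ℝ ι} (hφ : ‖φ‖ ≤ 1) (hθ : ‖θ‖ ≤ 1) :
    (φ.ofLp ⬝ᵥ θ.ofLp) ^ 2
      ≤ √(θ.ofLp ⬝ᵥ M *ᵥ θ.ofLp) * √(φ.ofLp ⬝ᵥ M⁻¹ *ᵥ φ.ofLp) :=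
  calc (φ.ofLp ⬝ᵥ θ.ofLp) ^ 2 ≤ |φ.ofLp ⬝ᵥ θ.ofLp| := sq_dotProduct_le_of_norm_le_one hφ hθ
    _ = √((φ.ofLp ⬝ᵥ θ.ofLp) ^ 2) := (Real.sqrt_sq_eq_abs _).symm
    _ ≤ √((φ.ofLp ⬝ᵥ M⁻¹ *ᵥ φ.ofLp) * (θ.ofLp ⬝ᵥ M *ᵥ θ.ofLp)) :=
        Real.sqrt_le_sqrt (hM.sq_dotProduct_le _ _)
    _ = _ := by
        rw [Real.sqrt_mul (by simpa using hM.inv.posSemidef.dotProduct_mulVec_nonneg φ.ofLp),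
          mul_comm]

theorem sq_directionalReach_le (hprob : ∀ μ ∈ P, IsProbabilityMeasure μ)
    (hsupp : ∀ μ ∈ P, μ {φ | ‖φ‖ ≤ 1} = 1) {M : Matrix ι ι ℝ} (hM : M.PosDef) {ε : ℝ}
    (hε0 : 0 ≤ ε) (hε : ∀ μ ∈ P, ∫ φ, √(φ.ofLp ⬝ᵥ M⁻¹ *ᵥ φ.ofLp) ∂μ ≤ ε)
    {θ : EuclideanSpace ℝ ι} (hθ : ‖θ‖ ≤ 1) :
    directionalReach P θ ^ 2 ≤ √(θ.ofLp ⬝ᵥ M *ᵥ θ.ofLp) * ε := by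
  have hle : directionalReach P θ ≤ √(√(θ.ofLp ⬝ᵥ M *ᵥ θ.ofLp) * ε) := by
    refine Real.iSup_le (fun ⟨μ, hμ⟩ => ?_) (Real.sqrt_nonneg _)
    have := hprob μ hμ
    exact Real.sqrt_le_sqrt <| integral_le_mul_of_ae_le_mul (Real.sqrt_nonneg _)
      (ae_of_all _ fun _ => sq_nonneg _)
      (EuclideanSpace.integrable_sqrt_dotProduct_mulVec (hsupp μ hμ) _)
      ((EuclideanSpace.ae_norm_le_one (hsupp μ hμ)).mono fun φ hφ =>
        sq_dotProduct_le_sqrt_mul_sqrt hM hφ hθ)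
      (hε μ hμ)
  calc directionalReach P θ ^ 2 ≤ √(√(θ.ofLp ⬝ᵥ M *ᵥ θ.ofLp) * ε) ^ 2 :=
        pow_le_pow_left₀ (directionalReach_nonneg θ) hle 2
    _ = _ := Real.sq_sqrt (by positivity)

theorem sq_reachability_le (hprob : ∀ μ ∈ P, IsProbabilityMeasure μ)
    (hsupp : ∀ μ ∈ P, μ {φ | ‖φ‖ ≤ 1} = 1) {M : Matrix ι ι ℝ} (hM : M.PosDef) {ε : ℝ}
    (hε0 : 0 ≤ ε) (hε : ∀ μ ∈ P, ∫ φ, √(φ.ofLp ⬝ᵥ M⁻¹ *ᵥ φ.ofLp) ∂μ ≤ ε)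
    {θ : EuclideanSpace ℝ ι} (hθ : ‖θ‖ = 1) :
    reachability P ^ 2 ≤ √(θ.ofLp ⬝ᵥ M *ᵥ θ.ofLp) * ε :=
  (pow_le_pow_left₀ reachability_nonneg (reachability_le_directionalReach hθ) 2).trans
    (sq_directionalReach_le hprob hsupp hM hε0 hε hθ.le)

theorem three_mul_le_dotProduct_mulVec_of_le_sq_reachability
    (hprob : ∀ μ ∈ P, IsProbabilityMeasure μ) (hsupp : ∀ μ ∈ P, μ {φ | ‖φ‖ ≤ 1} = 1)
    {c : ℝ} (hc : 0 < c) {A : Matrix ι ι ℝ} (hA : A.PosSemidef) {ε : ℝ} (hε0 : 0 < ε)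
    (hε : ∀ μ ∈ P, ∫ φ, √(φ.ofLp ⬝ᵥ (c • (1 : Matrix ι ι ℝ) + A)⁻¹ *ᵥ φ.ofLp) ∂μ ≤ ε)
    (hreach : 2 * √c * ε ≤ reachability P ^ 2) {θ : EuclideanSpace ℝ ι} (hθ : ‖θ‖ = 1) :
    3 * c ≤ θ.ofLp ⬝ᵥ A *ᵥ θ.ofLp := by
  have h := sq_reachability_le hprob hsupp ((PosDef.one.smul hc).add_posSemidef hA) hε0.le hε hθ
  rw [dotProduct_smul_one_add_mulVec, EuclideanSpace.dotProduct_self_eq_norm_sq, hθ,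
    one_pow, mul_one] at h
  have h2 : 2 * √c ≤ √(c + θ.ofLp ⬝ᵥ A *ᵥ θ.ofLp) :=
    le_of_mul_le_mul_right (hreach.trans h) hε0
  rw [Real.le_sqrt' (by positivity), mul_pow, Real.sq_sqrt hc.le] at h2
  linarith

end Reachability

theorem reachability_blow_up_general
    (d : ℕ) (c : ℝ) (hc : 0 < c)
    (A : Matrix (Fin d) (Fin d) ℝ) (hA : A.PosSemidef)
    (P : Set (Measure (EuclideanSpace ℝ (Fin d))))
    (hprob : ∀ μ ∈ P, IsProbabilityMeasure μ)
    (hsupp : ∀ μ ∈ P, μ {φ | ‖φ‖ ≤ 1} = 1)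
    (ν : ℝ)
    (hν : ν = ⨅ θ : {θ : EuclideanSpace ℝ (Fin d) // ‖θ‖ = 1},
        ⨆ μ : P, Real.sqrt (∫ φ, ((φ : EuclideanSpace ℝ (Fin d)) ⬝ᵥ (θ : Fin d → ℝ)) ^ 2 ∂(μ : Measure (EuclideanSpace ℝ (Fin d)))))
    (ε' : ℝ) (hε'pos : 0 < ε')
    (hε' : ∀ μ ∈ P, (∫ φ, Real.sqrt
        (φ ⬝ᵥ ((c • (1 : Matrix (Fin d) (Fin d) ℝ) + A)⁻¹).mulVec φ) ∂μ) ≤ ε')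
    (hε'ν : ε' ≤ ν ^ 2 / (2 * Real.sqrt c)) :
    ∀ n : ℝ, 1 ≤ n → ∀ μ ∈ P,
      (∫ φ, Real.sqrt
          (φ ⬝ᵥ ((c • (1 : Matrix (Fin d) (Fin d) ℝ) + n • A)⁻¹).mulVec φ) ∂μ) ≤
        Real.sqrt (2 * ε' / (Real.sqrt c * (1 + n))) := by
  change ν = reachability P at hν
  have hreach : 2 * √c * ε' ≤ reachability P ^ 2 := by
    rw [le_div_iff₀ (by positivity), hν] at hε'ν
    linarith
  have hAc : ∀ u, c * (u ⬝ᵥ u) ≤ u ⬝ᵥ A *ᵥ u :=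
    EuclideanSpace.le_dotProduct_mulVec_of_forall_norm_eq_one fun θ hθ =>
      (by linarith : c ≤ 3 * c).trans <| three_mul_le_dotProduct_mulVec_of_le_sq_reachability
        hprob hsupp hc hA hε'pos hε' hreach hθ
  have hεc : √c * ε' ≤ 1 := by
    nlinarith [pow_le_one₀ reachability_nonneg (reachability_le_one hprob hsupp) (n := 2)]
  intro n hn μ hμ
  have := hprob μ hμ
  calc ∫ φ, √(φ.ofLp ⬝ᵥ (c • (1 : Matrix (Fin d) (Fin d) ℝ) + n • A)⁻¹ *ᵥ φ.ofLp) ∂μ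
      ≤ √(2 / (1 + n)) * ε' :=
        integral_le_mul_of_ae_le_mul (Real.sqrt_nonneg _)
          (ae_of_all _ fun _ => Real.sqrt_nonneg _)
          (EuclideanSpace.integrable_sqrt_dotProduct_mulVec (hsupp μ hμ) _)
          (ae_of_all _ fun φ => by
            rw [← Real.sqrt_mul (by positivity)]
            exact Real.sqrt_le_sqrt (dotProduct_inv_smul_one_add_smul_mulVec_le hc hn hA hAc _))
          (hε' μ hμ)
    _ = √(2 / (1 + n) * ε' ^ 2) := by rw [Real.sqrt_mul (by positivity), Real.sqrt_sq hε'pos.le]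
    _ ≤ √(2 * ε' / (√c * (1 + n))) := by
        refine Real.sqrt_le_sqrt ?_
        rw [div_mul_eq_mul_div, div_le_div_iff₀ (by positivity) (by positivity)]
        nlinarith [mul_le_mul_of_nonneg_left hεc (by positivity : 0 ≤ 2 * ε' * (1 + n))]

/-- Reachability amplification: let `P` be a nonempty family of probability measures
on the unit ball of `ℝ^d`, `A ⪰ 0` symmetric, `c > 0`, and let
`ν = inf_{‖θ‖=1} sup_{μ ∈ P} √(∫ (φᵀθ)² dμ)` be the reachability coefficient.
If every `μ ∈ P` satisfies `∫ √(φᵀ(cI + A)⁻¹φ) dμ ≤ ε̃` and `ε̃ ≤ ν²/(2√c)`, then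
for every real `n ≥ 1` and every `μ ∈ P`,
`∫ √(φᵀ(cI + nA)⁻¹φ) dμ ≤ √(2 ε̃ / (√c (1 + n)))`. -/
theorem reachability_blow_up
    (d : ℕ) (c : ℝ) (hc : 0 < c)
    (A : Matrix (Fin d) (Fin d) ℝ) (hAsymm : A.IsSymm) (hA : A.PosSemidef)
    (P : Set (Measure (EuclideanSpace ℝ (Fin d)))) (hPne : P.Nonempty)
    (hprob : ∀ μ ∈ P, IsProbabilityMeasure μ)
    (hsupp : ∀ μ ∈ P, μ {φ | ‖φ‖ ≤ 1} = 1)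
    (ν : ℝ)
    (hν : ν = ⨅ θ : {θ : EuclideanSpace ℝ (Fin d) // ‖θ‖ = 1},
        ⨆ μ : P, Real.sqrt (∫ φ, ((φ : EuclideanSpace ℝ (Fin d)) ⬝ᵥ (θ : Fin d → ℝ)) ^ 2 ∂(μ : Measure (EuclideanSpace ℝ (Fin d)))))
    (ε' : ℝ) (hε'pos : 0 < ε')
    (hε' : ∀ μ ∈ P, (∫ φ, Real.sqrt
        (φ ⬝ᵥ ((c • (1 : Matrix (Fin d) (Fin d) ℝ) + A)⁻¹).mulVec φ) ∂μ) ≤ ε')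
    (hε'ν : ε' ≤ ν ^ 2 / (2 * Real.sqrt c)) :
    ∀ n : ℝ, 1 ≤ n → ∀ μ ∈ P,
      (∫ φ, Real.sqrt
          (φ ⬝ᵥ ((c • (1 : Matrix (Fin d) (Fin d) ℝ) + n • A)⁻¹).mulVec φ) ∂μ) ≤
        Real.sqrt (2 * ε' / (Real.sqrt c * (1 + n))) :=
  reachability_blow_up_general d c hc A hA P hprob hsupp ν hν ε' hε'pos hε' hε'ν
end
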